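/- arXiv:0810.1999 — 8 statements merged into one kernel-verified Lean document; each statement's English description precedes it below -/
import Mathlib

section
/- Let G be a finite subgroup of SO(2n+1) with n ≥ 2 such that every nontrivial element of G has exactly one eigenvalue equal to 1. Then there exists a nonzero vector v in ℝ^(2n+1) such that g(v) = v for all g in G. -/
/-- The dimension of the eigenspace of eigenvalue 1 of (the linear map given by) a matrix. -/
noncomputable def fixedSpaceDim {m : ℕ} (g : Matrix (Fin m) (Fin m) ℝ) : ℕ :=
  Module.finrank ℝ ↥(Module.End.eigenspace (Matrix.toLin' g) 1)

/-!
Assume `G ≠ 1` and let `X` be the finite set of poles of `G`: the unit vectors on the axis of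
some nontrivial element. A nontrivial `g` fixes exactly the two poles `±a` of its axis, so
Burnside's lemma for the action of `G` on `X` reads `k |G| = ∑ₓ |Gₓ| = |X| + 2 (|G| - 1)`, where
`k` is the number of orbits. If no pole is fixed by all of `G`, then `2 ≤ |Gₓ| ≤ |G| / 2` for
every pole, which forces `k = 3` and `|X| = |G| + 2`, as for the finite rotation groups of `ℝ³`.
In dimension `2n + 1 ≥ 5`, however, `G` has at most one involution: the `(-1)`-eigenspaces of two
involutions `s ≠ t` have dimension `2n`, so their intersection, which `st ≠ 1` fixes, has
dimension at least `2n - 1 > 1`. Hence at most two poles have a stabilizer of order `2`, so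
`∑ₓ |Gₓ| ≥ 3 |X| - 2 > 3 |G|`, a contradiction.
-/

open Module Module.End Matrix MulAction

section Involution

variable {K V : Type*} [Field K] [AddCommGroup V] [Module K V] [FiniteDimensional K V]

theorem Module.End.finrank_eigenspace_one_add_finrank_eigenspace_neg_one [NeZero (2 : K)]
    {f : End K V} (hf : f * f = 1) :
    finrank K (eigenspace f 1) + finrank K (eigenspace f (-1)) = finrank K V := by
  have hff (x : V) : f (f x) = x := congrArg (· x) hf
  have hsup : eigenspace f 1 ⊔ eigenspace f (-1) = ⊤ := by
    refine Submodule.eq_top_iff'.mpr fun x => Submodule.mem_sup.mpr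
      ⟨(2⁻¹ : K) • (x + f x), ?_, (2⁻¹ : K) • (x - f x), ?_, ?_⟩
    · rw [mem_eigenspace_iff, map_smul, map_add, hff, add_comm, one_smul]
    · rw [mem_eigenspace_iff, map_smul, map_sub, hff, neg_smul, one_smul, ← smul_neg, neg_sub]
    · rw [← smul_add, add_add_sub_cancel, ← two_smul K, smul_smul,
        inv_mul_cancel₀ (NeZero.ne 2), one_smul]
  have hinf : eigenspace f 1 ⊓ eigenspace f (-1) = ⊥ :=
    (disjoint_genEigenspace f (fun h => NeZero.ne (2 : K) (by linear_combination h)) 1 1).eq_bot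
  have := Submodule.finrank_sup_add_finrank_inf_eq (eigenspace f 1) (eigenspace f (-1))
  rwa [hsup, hinf, finrank_top, finrank_bot, add_zero, eq_comm] at this

theorem Module.End.finrank_eigenspace_neg_one_add_le (f g : End K V) :
    finrank K (eigenspace f (-1)) + finrank K (eigenspace g (-1)) ≤
      finrank K (eigenspace (f * g) 1) + finrank K V := by
  have hle : eigenspace f (-1) ⊓ eigenspace g (-1) ≤ eigenspace (f * g) 1 := by
    rintro x ⟨hfx, hgx⟩
    rw [SetLike.mem_coe, mem_eigenspace_iff] at hfx hgx
    rw [mem_eigenspace_iff, mul_apply, hgx, map_smul, hfx, smul_smul]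
    norm_num
  rw [← Submodule.finrank_sup_add_finrank_inf_eq]
  exact add_le_add (Submodule.finrank_le _) (Submodule.finrank_mono hle) |>.trans_eq (add_comm _ _)

end Involution

theorem Submodule.ncard_setOf_dotProduct_self_eq_one {ι : Type*} [Fintype ι]
    {V : Submodule ℝ (ι → ℝ)} (hV : finrank ℝ V = 1) :
    {x | x ∈ V ∧ x ⬝ᵥ x = 1}.ncard = 2 := by
  obtain ⟨⟨v, hvV⟩, hv0, hv⟩ := finrank_eq_one_iff'.mp hV
  replace hv0 : v ≠ 0 := fun h => hv0 (Subtype.ext h)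
  have hpos : 0 < v ⬝ᵥ v := lt_of_le_of_ne (Fintype.sum_nonneg fun i => mul_self_nonneg (v i))
    (Ne.symm (dotProduct_self_eq_zero.not.mpr hv0))
  obtain ⟨r, hr, hrv⟩ : ∃ r : ℝ, r ≠ 0 ∧ r * r = v ⬝ᵥ v :=
    ⟨√(v ⬝ᵥ v), (Real.sqrt_pos.mpr hpos).ne', Real.mul_self_sqrt hpos.le⟩
  set a := r⁻¹ • v with ha_def
  have ha : a ⬝ᵥ a = 1 := by
    rw [smul_dotProduct, dotProduct_smul, smul_smul, smul_eq_mul, ← hrv]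
    field_simp
  have hpair : {x | x ∈ V ∧ x ⬝ᵥ x = 1} = {a, -a} := by
    ext x
    constructor
    · rintro ⟨hxV, hx⟩
      obtain ⟨c, hc⟩ := hv ⟨x, hxV⟩
      replace hc : x = (c * r) • a := by
        rw [ha_def, smul_smul, mul_assoc, mul_inv_cancel₀ hr, mul_one]
        exact (congrArg Subtype.val hc).symm
      rw [hc, smul_dotProduct, dotProduct_smul, ha, smul_eq_mul, smul_eq_mul, mul_one,
        mul_self_eq_one_iff] at hx
      rcases hx with h | h <;> simp [hc, h]
    · rintro (rfl | rfl)
      · exact ⟨V.smul_mem _ hvV, ha⟩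
      · exact ⟨V.neg_mem (V.smul_mem _ hvV), by rw [neg_dotProduct, dotProduct_neg, neg_neg, ha]⟩
  rw [hpair, Set.ncard_pair (self_eq_neg.not.mpr ?_)]
  rintro h
  simp [h] at ha

theorem le_three_of_fixedSpaceDim_eq_one {m : ℕ} {s t : Matrix (Fin m) (Fin m) ℝ}
    (hs : s * s = 1) (ht : t * t = 1) (hs1 : fixedSpaceDim s = 1) (ht1 : fixedSpaceDim t = 1)
    (hst : fixedSpaceDim (s * t) = 1) : m ≤ 3 := by
  have hmul (u v : Matrix (Fin m) (Fin m) ℝ) : toLin' (u * v) = toLin' u * toLin' v :=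
    toLin'_mul u v
  have hinv {u : Matrix (Fin m) (Fin m) ℝ} (hu : u * u = 1) : toLin' u * toLin' u = 1 := by
    rw [← hmul, hu, toLin'_one]
    rfl
  have hs' := finrank_eigenspace_one_add_finrank_eigenspace_neg_one (hinv hs)
  have ht' := finrank_eigenspace_one_add_finrank_eigenspace_neg_one (hinv ht)
  have hst' := finrank_eigenspace_neg_one_add_le (toLin' s) (toLin' t)
  rw [← hmul] at hst'
  unfold fixedSpaceDim at hs1 ht1 hst
  rw [finrank_fin_fun] at hs' ht' hst'
  omega

section FixedPointCounting

variable {G X : Type*} [Group G] [MulAction G X]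

theorem MulAction.sum_card_stabilizer_eq_sum_ncard_fixedBy [Fintype G] [Fintype X] :
    ∑ x : X, Nat.card (stabilizer G x) = ∑ g : G, (fixedBy X g).ncard := by
  simp only [← Nat.card_coe_set_eq]
  rw [← Nat.card_sigma, ← Nat.card_sigma]
  exact Nat.card_congr <|
    (Equiv.subtypeProdEquivSigmaSubtype fun x g => g ∈ stabilizer G x).symm.trans <|
      ((Equiv.prodComm X G).subtypeEquiv fun _ => Iff.rfl).trans
        (Equiv.subtypeProdEquivSigmaSubtype fun g x => x ∈ fixedBy X g)

theorem MulAction.sum_card_stabilizer_eq_card_orbits_mul_card_group [Fintype G] [Fintype X] :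
    ∑ x : X, Nat.card (stabilizer G x) = Nat.card (orbitRel.Quotient G X) * Nat.card G := by
  classical
  rw [sum_card_stabilizer_eq_sum_ncard_fixedBy]
  simp only [← Nat.card_coe_set_eq, Nat.card_eq_fintype_card]
  exact sum_card_fixedBy_eq_card_orbits_mul_card_group G X

theorem MulAction.sum_card_stabilizer_eq_of_ncard_fixedBy_eq_two [Fintype G] [Fintype X]
    (hfix : ∀ g : G, g ≠ 1 → (fixedBy X g).ncard = 2) :
    ∑ x : X, Nat.card (stabilizer G x) = Nat.card X + 2 * (Nat.card G - 1) := by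
  classical
  rw [sum_card_stabilizer_eq_sum_ncard_fixedBy, ← Finset.add_sum_erase _ _ (Finset.mem_univ 1),
    fixedBy_one_eq_univ, Set.ncard_univ,
    Finset.sum_congr rfl fun g hg => hfix g (Finset.ne_of_mem_erase hg), Finset.sum_const,
    Finset.card_erase_of_mem (Finset.mem_univ 1), Finset.card_univ, smul_eq_mul, mul_comm]
  simp only [Nat.card_eq_fintype_card]

theorem MulAction.two_mul_card_stabilizer_le [Finite G] {x : X} (hx : ∃ g : G, g • x ≠ x) :
    2 * Nat.card (stabilizer G x) ≤ Nat.card G := by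
  obtain ⟨g, hg⟩ := hx
  have hne : stabilizer G x ≠ ⊤ := fun htop => hg (htop ▸ Subgroup.mem_top g : g ∈ stabilizer G x)
  rw [← (stabilizer G x).card_mul_index, mul_comm]
  exact Nat.mul_le_mul_left _ (Subgroup.one_lt_index_of_ne_top hne)

theorem MulAction.ncard_setOf_card_stabilizer_eq_two_le [Finite G] [Finite X]
    (hfix : ∀ g : G, g ≠ 1 → (fixedBy X g).ncard = 2)
    (hinv : ∀ s t : G, orderOf s = 2 → orderOf t = 2 → s = t) :
    {x : X | Nat.card (stabilizer G x) = 2}.ncard ≤ 2 := by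
  have hcauchy (x : X) (hx : Nat.card (stabilizer G x) = 2) :
      ∃ s : G, orderOf s = 2 ∧ s • x = x := by
    obtain ⟨s, hs⟩ := exists_prime_orderOf_dvd_card' 2 hx.symm.dvd
    exact ⟨s, (Subgroup.orderOf_coe s).trans hs, s.2⟩
  rcases Set.eq_empty_or_nonempty {x : X | Nat.card (stabilizer G x) = 2} with h | ⟨x₀, hx₀⟩
  · rw [h, Set.ncard_empty]
    omega
  obtain ⟨s, hs, -⟩ := hcauchy x₀ hx₀
  calc _ ≤ (fixedBy X s).ncard := Set.ncard_le_ncard (fun x hx => by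
          obtain ⟨t, ht, htx⟩ := hcauchy x hx
          rwa [hinv s t hs ht]) (Set.toFinite _)
    _ = 2 := hfix s (by rintro rfl; simp at hs)

theorem MulAction.exists_forall_smul_eq_of_ncard_fixedBy_eq_two [Finite G] [Finite X]
    [Nonempty X] (hfix : ∀ g : G, g ≠ 1 → (fixedBy X g).ncard = 2)
    (hstab : ∀ x : X, stabilizer G x ≠ ⊥)
    (hinv : ∀ s t : G, orderOf s = 2 → orderOf t = 2 → s = t) :
    ∃ x : X, ∀ g : G, g • x = x := by
  classical
  have := Fintype.ofFinite G
  have := Fintype.ofFinite X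
  by_contra! hmove
  have hconst (c : ℕ) : ∑ _x : X, c = Nat.card X * c := by simp [Nat.card_eq_fintype_card]
  have hstab2 (x : X) : 2 ≤ Nat.card (stabilizer G x) :=
    (stabilizer G x).one_lt_card_iff_ne_bot.mpr (hstab x)
  have hburnside := sum_card_stabilizer_eq_card_orbits_mul_card_group (G := G) (X := X)
  have hfixed := sum_card_stabilizer_eq_of_ncard_fixedBy_eq_two hfix
  have hsum_ge_two : 2 * Nat.card X ≤ ∑ x : X, Nat.card (stabilizer G x) := by
    rw [mul_comm, ← hconst]
    exact Finset.sum_le_sum fun x _ => hstab2 x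
  have hsum_le_half : 2 * ∑ x : X, Nat.card (stabilizer G x) ≤ Nat.card X * Nat.card G := by
    rw [Finset.mul_sum, ← hconst]
    exact Finset.sum_le_sum fun x _ => two_mul_card_stabilizer_le (hmove x)
  have hsum_ge_three : 3 * Nat.card X ≤ ∑ x : X, Nat.card (stabilizer G x) +
      {x : X | Nat.card (stabilizer G x) = 2}.ncard := by
    rw [Set.ncard_eq_toFinset_card', Set.toFinset_ofPred, Finset.card_filter,
      ← Finset.sum_add_distrib, mul_comm, ← hconst]
    refine Finset.sum_le_sum fun x _ => ?_
    have := hstab2 x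
    split_ifs <;> omega
  have hA := ncard_setOf_card_stabilizer_eq_two_le hfix hinv
  have hN : 0 < Nat.card G := Nat.card_pos
  have hX : 0 < Nat.card X := Nat.card_pos
  generalize ∑ x : X, Nat.card (stabilizer G x) = S at *
  generalize Nat.card (orbitRel.Quotient G X) = k at *
  generalize Nat.card G = N at *
  subst hburnside
  have hk : k < 4 := Nat.lt_of_mul_lt_mul_right (a := N) (by omega)
  have h2k : 2 * k ≤ Nat.card X :=
    Nat.le_of_mul_le_mul_right (by rw [mul_assoc]; exact hsum_le_half) hN
  interval_cases k <;> omega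

end FixedPointCounting

namespace Matrix.orthogonalGroup

section Action

variable {ι : Type*} [Fintype ι] [DecidableEq ι]

instance : MulAction (orthogonalGroup ι ℝ) (ι → ℝ) where
  smul g v := (g : Matrix ι ι ℝ) *ᵥ v
  one_smul := one_mulVec
  mul_smul g h v := (mulVec_mulVec v (g : Matrix ι ι ℝ) h).symm

theorem smul_def (g : orthogonalGroup ι ℝ) (v : ι → ℝ) : g • v = (g : Matrix ι ι ℝ) *ᵥ v :=
  rfl

theorem dotProduct_smul_smul (g : orthogonalGroup ι ℝ) (v w : ι → ℝ) :
    (g • v) ⬝ᵥ (g • w) = v ⬝ᵥ w := by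
  rw [smul_def, smul_def, dotProduct_mulVec, vecMul_mulVec,
    (mem_orthogonalGroup_iff' ι ℝ).mp g.2, vecMul_one]

-- Shortcut instances: without them, instance search for the actions of `G` times out.
instance (G : Subgroup (orthogonalGroup ι ℝ)) : SMul G (ι → ℝ) := Subgroup.instMulAction.toSMul

def poles (G : Subgroup (orthogonalGroup ι ℝ)) : SubMulAction G (ι → ℝ) where
  carrier := {x | x ⬝ᵥ x = 1 ∧ ∃ g : G, g ≠ 1 ∧ g • x = x}
  smul_mem' g x := by
    rintro ⟨hx, h, hh, hhx⟩
    refine ⟨?_, g * h * g⁻¹, ?_, ?_⟩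
    · rw [Subgroup.smul_def, dotProduct_smul_smul, hx]
    · simpa [mul_inv_eq_one] using hh
    · rw [mul_smul, mul_smul, inv_smul_smul, hhx]

instance (G : Subgroup (orthogonalGroup ι ℝ)) : MulAction G (poles G) :=
  SubMulAction.mulAction (poles G)

theorem stabilizer_poles_ne_bot (G : Subgroup (orthogonalGroup ι ℝ)) (x : poles G) :
    stabilizer G x ≠ ⊥ := by
  obtain ⟨-, g, hg, hgx⟩ := x.2
  exact Subgroup.ne_bot_iff_exists_ne_one.mpr
    ⟨⟨g, Subtype.ext hgx⟩, fun h => hg (congrArg Subtype.val h)⟩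

end Action

variable {m : ℕ} (G : Subgroup (orthogonalGroup (Fin m) ℝ))

theorem ncard_fixedBy_poles {g : G} (hg : g ≠ 1)
    (h1 : fixedSpaceDim ((g : orthogonalGroup (Fin m) ℝ) : Matrix (Fin m) (Fin m) ℝ) = 1) :
    (fixedBy (poles G) g).ncard = 2 := by
  have himage : Subtype.val '' fixedBy (poles G) g = {x | x ∈ eigenspace
      (toLin' ((g : orthogonalGroup (Fin m) ℝ) : Matrix (Fin m) (Fin m) ℝ)) 1 ∧ x ⬝ᵥ x = 1} := by
    ext x
    simp only [Set.mem_image, mem_fixedBy, Subtype.exists, Set.mem_ofPred_eq, mem_eigenspace_iff,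
      toLin'_apply, one_smul]
    constructor
    · rintro ⟨x, hx, hgx, rfl⟩
      exact ⟨congrArg Subtype.val hgx, hx.1⟩
    · rintro ⟨hgx, hx⟩
      exact ⟨x, ⟨hx, g, hg, hgx⟩, Subtype.ext hgx, rfl⟩
  rw [← Set.ncard_image_of_injective _ Subtype.val_injective, himage]
  exact Submodule.ncard_setOf_dotProduct_self_eq_one h1

theorem finite_poles [Finite G]
    (heig : ∀ g ∈ G, g ≠ 1 → fixedSpaceDim (g : Matrix (Fin m) (Fin m) ℝ) = 1) :
    Finite (poles G) := by
  refine Set.finite_univ_iff.mp ((Set.finite_iUnion fun g : G =>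
    Set.finite_iUnion fun hg : g ≠ 1 =>
      Set.finite_of_ncard_ne_zero (s := fixedBy (poles G) g) ?_).subset ?_)
  · rw [ncard_fixedBy_poles G hg (heig g g.2 (OneMemClass.coe_eq_one.not.mpr hg))]
    norm_num
  · rintro ⟨x, hx, g, hg, hgx⟩ -
    exact Set.mem_iUnion₂.mpr ⟨g, hg, Subtype.ext hgx⟩

theorem eq_of_orderOf_eq_two (hm : 4 ≤ m)
    (heig : ∀ g ∈ G, g ≠ 1 → fixedSpaceDim (g : Matrix (Fin m) (Fin m) ℝ) = 1)
    {s t : G} (hs : orderOf s = 2) (ht : orderOf t = 2) : s = t := by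
  have hsq {u : G} (hu : orderOf u = 2) : u * u = 1 := by rw [← sq, ← hu, pow_orderOf_eq_one]
  have hne {u : G} (hu : orderOf u = 2) : (u : orthogonalGroup (Fin m) ℝ) ≠ 1 := fun h => by
    rw [OneMemClass.coe_eq_one.mp h, orderOf_one] at hu
    exact absurd hu (by norm_num)
  have hmat {u : G} (hu : orderOf u = 2) :
      ((u : orthogonalGroup (Fin m) ℝ) : Matrix (Fin m) (Fin m) ℝ) * u = 1 := by
    rw [← Submonoid.coe_mul, ← Subgroup.coe_mul, hsq hu]
    rfl
  by_contra hst
  have hst1 : ((s * t : G) : orthogonalGroup (Fin m) ℝ) ≠ 1 := by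
    rwa [Ne, OneMemClass.coe_eq_one, mul_eq_one_iff_eq_inv, inv_eq_of_mul_eq_one_right (hsq ht)]
  have hst2 := heig _ (s * t).2 hst1
  rw [Subgroup.coe_mul, Submonoid.coe_mul] at hst2
  have := le_three_of_fixedSpaceDim_eq_one (hmat hs) (hmat ht) (heig _ s.2 (hne hs))
    (heig _ t.2 (hne ht)) hst2
  omega

end Matrix.orthogonalGroup

theorem common_fixed_vector_of_SO_odd_general
    (n : ℕ) (hn : 2 ≤ n)
    (G : Subgroup (Matrix.orthogonalGroup (Fin (2*n+1)) ℝ)) (hG : Finite G)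
    (heig : ∀ g ∈ G, g ≠ 1 →
      fixedSpaceDim (g : Matrix (Fin (2*n+1)) (Fin (2*n+1)) ℝ) = 1) :
    ∃ v : Fin (2*n+1) → ℝ, v ≠ 0 ∧
      ∀ g ∈ G, Matrix.mulVec (g : Matrix (Fin (2*n+1)) (Fin (2*n+1)) ℝ) v = v := by
  rcases eq_or_ne G ⊥ with rfl | hG1
  · refine ⟨fun _ => 1, Function.ne_iff.mpr ⟨0, one_ne_zero⟩, fun g hg => ?_⟩
    rw [Subgroup.mem_bot.mp hg]
    exact one_mulVec _
  have hfix (g : G) (hg : g ≠ 1) : (fixedBy (orthogonalGroup.poles G) g).ncard = 2 :=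
    orthogonalGroup.ncard_fixedBy_poles G hg (heig g g.2 (OneMemClass.coe_eq_one.not.mpr hg))
  obtain ⟨g, hg⟩ := Subgroup.ne_bot_iff_exists_ne_one.mp hG1
  obtain ⟨x₀, -⟩ := Set.nonempty_of_ncard_ne_zero (s := fixedBy (orthogonalGroup.poles G) g)
    (by rw [hfix g hg]; norm_num)
  have : Nonempty (orthogonalGroup.poles G) := ⟨x₀⟩
  have : Finite (orthogonalGroup.poles G) := orthogonalGroup.finite_poles G heig
  obtain ⟨⟨x, hx⟩, hx_fixed⟩ := exists_forall_smul_eq_of_ncard_fixedBy_eq_two hfix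
    (orthogonalGroup.stabilizer_poles_ne_bot G)
    fun s t => orthogonalGroup.eq_of_orderOf_eq_two G (by omega) heig
  exact ⟨x, by rintro rfl; simpa using hx.1, fun g hg => congrArg Subtype.val (hx_fixed ⟨g, hg⟩)⟩

/-- Let `G` be a finite subgroup of `SO(2n+1)`, `n ≥ 2`, such that every nontrivial element of
`G` has exactly one eigenvalue equal to `1` (one-dimensional fixed space). Then there is a
nonzero vector `v ∈ ℝ^(2n+1)` fixed by every element of `G`. -/
theorem common_fixed_vector_of_SO_odd
    (n : ℕ) (hn : 2 ≤ n)
    (G : Subgroup (Matrix.orthogonalGroup (Fin (2*n+1)) ℝ)) (hG : Finite G)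
    (hdet : ∀ g ∈ G, ((g : Matrix (Fin (2*n+1)) (Fin (2*n+1)) ℝ)).det = 1)
    (heig : ∀ g ∈ G, g ≠ 1 →
      fixedSpaceDim (g : Matrix (Fin (2*n+1)) (Fin (2*n+1)) ℝ) = 1) :
    ∃ v : Fin (2*n+1) → ℝ, v ≠ 0 ∧
      ∀ g ∈ G, Matrix.mulVec (g : Matrix (Fin (2*n+1)) (Fin (2*n+1)) ℝ) v = v :=
  common_fixed_vector_of_SO_odd_general n hn G hG heig
end

section
/- Let G be a finite subgroup of SO(2n+1) with n ≥ 2, of even order, such that every nontrivial element has exactly one eigenvalue equal to 1. Then G contains a unique element of order 2. -/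
lemma invol_finrank_split {m : ℕ} (f : Module.End ℝ (Fin m → ℝ)) (hf : f * f = 1) :
    Module.finrank ℝ ↥(Module.End.eigenspace f 1) +
      Module.finrank ℝ ↥(LinearMap.ker (f + 1)) = m := by
  have hff : ∀ x, f (f x) = x := fun x => by
    have := LinearMap.congr_fun hf x
    simpa using this
  have hsup : Module.End.eigenspace f 1 ⊔ LinearMap.ker (f + 1) = ⊤ := by
    rw [eq_top_iff]
    intro x _
    refine Submodule.mem_sup.2 ⟨(1/2 : ℝ) • (x + f x), ?_, (1/2 : ℝ) • (x - f x), ?_, by module⟩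
    · rw [Module.End.mem_eigenspace_iff]
      simp [map_add, map_smul, hff, add_comm]
    · rw [LinearMap.mem_ker]
      simp [map_add, map_smul, map_sub, hff]
      module
  have hinf : Module.End.eigenspace f 1 ⊓ LinearMap.ker (f + 1) = ⊥ := by
    rw [eq_bot_iff]
    intro x hx
    rw [Submodule.mem_inf] at hx
    obtain ⟨h1, h2⟩ := hx
    rw [Module.End.mem_eigenspace_iff] at h1
    rw [LinearMap.mem_ker] at h2
    simp only [LinearMap.add_apply, Module.End.one_apply] at h2
    have hx : (2 : ℝ) • x = 0 := by
      have : f x + x = 0 := h2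
      rw [h1, one_smul] at this
      rw [two_smul]; exact this
    have := smul_eq_zero.1 hx
    simpa [Submodule.mem_bot] using this.resolve_left (by norm_num)
  have := Submodule.finrank_sup_add_finrank_inf_eq (Module.End.eigenspace f 1)
    (LinearMap.ker (f + 1))
  rw [hsup, hinf] at this
  simp only [finrank_top, finrank_bot, add_zero] at this
  rw [← this]
  simp [Module.finrank_pi]

/-- Let `G` be a finite subgroup of `SO(2n+1)`, `n ≥ 2`, of even order, such that every
nontrivial element has exactly one eigenvalue equal to `1`. Then `G` contains a unique element
of order `2`. -/
theorem unique_involution_of_SO_odd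
    (n : ℕ) (hn : 2 ≤ n)
    (G : Subgroup (Matrix.orthogonalGroup (Fin (2*n+1)) ℝ)) (hG : Finite G)
    (heven : Even (Nat.card G))
    (hdet : ∀ g ∈ G, ((g : Matrix (Fin (2*n+1)) (Fin (2*n+1)) ℝ)).det = 1)
    (heig : ∀ g ∈ G, g ≠ 1 →
      fixedSpaceDim (g : Matrix (Fin (2*n+1)) (Fin (2*n+1)) ℝ) = 1) :
    ∃! σ : G, orderOf σ = 2 := by
  have : Finite ↥G := hG
  have : Fintype ↥G := Fintype.ofFinite _
  have hfact : Fact (Nat.Prime 2) := ⟨Nat.prime_two⟩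
  have hdvd : 2 ∣ Fintype.card ↥G := by
    rw [← Nat.card_eq_fintype_card]; exact heven.two_dvd
  obtain ⟨σ, hσ⟩ := exists_prime_orderOf_dvd_card (G := ↥G) 2 hdvd
  -- key claim: any two elements of order 2 multiply to 1
  have key : ∀ σ τ : ↥G, orderOf σ = 2 → orderOf τ = 2 → σ * τ = 1 := by
    intro σ τ hs ht
    by_contra hne
    -- matrices
    set A : Matrix (Fin (2*n+1)) (Fin (2*n+1)) ℝ := ((σ : Matrix.orthogonalGroup (Fin (2*n+1)) ℝ) : Matrix (Fin (2*n+1)) (Fin (2*n+1)) ℝ) with hA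
    set B : Matrix (Fin (2*n+1)) (Fin (2*n+1)) ℝ := ((τ : Matrix.orthogonalGroup (Fin (2*n+1)) ℝ) : Matrix (Fin (2*n+1)) (Fin (2*n+1)) ℝ) with hB
    have hσ2 : σ * σ = 1 := by
      have := pow_orderOf_eq_one σ; rwa [hs, sq] at this
    have hτ2 : τ * τ = 1 := by
      have := pow_orderOf_eq_one τ; rwa [ht, sq] at this
    have hAA : A * A = 1 := by
      have : ((σ * σ : ↥G) : Matrix.orthogonalGroup (Fin (2*n+1)) ℝ) = 1 := by
        rw [hσ2]; rfl
      have h2 : ((((σ * σ : ↥G)) : Matrix.orthogonalGroup (Fin (2*n+1)) ℝ) : Matrix (Fin (2*n+1)) (Fin (2*n+1)) ℝ) = 1 := by rw [this]; rfl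
      simpa [hA] using h2
    have hBB : B * B = 1 := by
      have : ((τ * τ : ↥G) : Matrix.orthogonalGroup (Fin (2*n+1)) ℝ) = 1 := by
        rw [hτ2]; rfl
      have h2 : ((((τ * τ : ↥G)) : Matrix.orthogonalGroup (Fin (2*n+1)) ℝ) : Matrix (Fin (2*n+1)) (Fin (2*n+1)) ℝ) = 1 := by rw [this]; rfl
      simpa [hB] using h2
    set f : Module.End ℝ (Fin (2*n+1) → ℝ) := Matrix.toLin' A with hfdef
    set g : Module.End ℝ (Fin (2*n+1) → ℝ) := Matrix.toLin' B with hgdef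
    have hf2 : f * f = 1 := by
      rw [hfdef, Module.End.mul_eq_comp, ← Matrix.toLin'_mul, hAA, Matrix.toLin'_one]
      rfl
    have hg2 : g * g = 1 := by
      rw [hgdef, Module.End.mul_eq_comp, ← Matrix.toLin'_mul, hBB, Matrix.toLin'_one]
      rfl
    have hff : ∀ x, f (f x) = x := fun x => by
      have := LinearMap.congr_fun hf2 x; simpa using this
    -- σ is nontrivial, so its fixed space has dimension 1
    have hσne : σ ≠ 1 := by
      intro h; rw [h, orderOf_one] at hs; omega
    have hτne : τ ≠ 1 := by
      intro h; rw [h, orderOf_one] at ht; omega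
    have hAfix : Module.finrank ℝ ↥(Module.End.eigenspace f 1) = 1 := by
      have := heig (σ : Matrix.orthogonalGroup (Fin (2*n+1)) ℝ) σ.2
        (fun h => hσne (Subtype.ext h))
      simpa [fixedSpaceDim, hfdef, hA] using this
    have hBfix : Module.finrank ℝ ↥(Module.End.eigenspace g 1) = 1 := by
      have := heig (τ : Matrix.orthogonalGroup (Fin (2*n+1)) ℝ) τ.2
        (fun h => hτne (Subtype.ext h))
      simpa [fixedSpaceDim, hgdef, hB] using this
    have hAker : Module.finrank ℝ ↥(LinearMap.ker (f + 1)) = 2*n := by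
      have := invol_finrank_split f hf2
      omega
    have hBker : Module.finrank ℝ ↥(LinearMap.ker (g + 1)) = 2*n := by
      have := invol_finrank_split g hg2
      omega
    -- the intersection of the (-1)-eigenspaces is large
    set s := LinearMap.ker (f + 1)
    set t := LinearMap.ker (g + 1)
    have hsum := Submodule.finrank_sup_add_finrank_inf_eq s t
    have hle : Module.finrank ℝ ↥(s ⊔ t) ≤ 2*n+1 := by
      have := Submodule.finrank_le (s ⊔ t)
      simpa [Module.finrank_pi] using this
    have hinfbig : 2*n - 1 ≤ Module.finrank ℝ ↥(s ⊓ t) := by omega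
    -- the intersection is fixed by στ
    have hC : ((((σ * τ : ↥G)) : Matrix.orthogonalGroup (Fin (2*n+1)) ℝ) : Matrix (Fin (2*n+1)) (Fin (2*n+1)) ℝ) = A * B := by
      rw [hA, hB]; rfl
    have hsub : s ⊓ t ≤ Module.End.eigenspace (Matrix.toLin' (A * B)) 1 := by
      intro x hx
      rw [Submodule.mem_inf] at hx
      obtain ⟨hx1, hx2⟩ := hx
      rw [LinearMap.mem_ker] at hx1 hx2
      simp only [LinearMap.add_apply, Module.End.one_apply] at hx1 hx2
      have hxf : f x = -x := by linear_combination (norm := module) hx1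
      have hxg : g x = -x := by linear_combination (norm := module) hx2
      rw [Module.End.mem_eigenspace_iff, Matrix.toLin'_mul]
      show f (g x) = (1:ℝ) • x
      rw [hxg, map_neg, hxf, neg_neg, one_smul]
    have hmono := Submodule.finrank_mono hsub
    have hbig : 2*n - 1 ≤ fixedSpaceDim (A * B) := by
      unfold fixedSpaceDim
      omega
    have hne1 : ((σ * τ : ↥G) : Matrix.orthogonalGroup (Fin (2*n+1)) ℝ) ≠ 1 := by
      intro h; exact hne (Subtype.ext h)
    have := heig ((σ * τ : ↥G) : Matrix.orthogonalGroup (Fin (2*n+1)) ℝ) (σ * τ).2 hne1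
    rw [hC] at this
    omega
  refine ⟨σ, hσ, ?_⟩
  intro τ hτ
  have h1 := key τ σ hτ hσ
  have hσ2 : σ * σ = 1 := by
    have := pow_orderOf_eq_one σ; rwa [hσ, sq] at this
  calc τ = τ * σ * σ⁻¹ := by group
    _ = σ := by rw [h1, one_mul, inv_eq_of_mul_eq_one_left hσ2]
end

section
/- Let H be a finite group of order p² (p prime) acting freely by isometries (orthogonal transformations) on the unit sphere S^(2n-1) ⊂ ℝ^(2n) with n ≥ 2, i.e., no nontrivial element has a fixed point on the sphere. Then H is cyclic. -/
open Matrix Finset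

lemma aux_sum_pow_eq_zero {N : ℕ} (M : Matrix (Fin N) (Fin N) ℝ) (m : ℕ)
    (hMm : M ^ m = 1) (hfix : ∀ v : Fin N → ℝ, v ≠ 0 → M.mulVec v ≠ v) :
    ∑ i ∈ range m, M ^ i = 0 := by
  have hdet : (M - 1).det ≠ 0 := by
    intro h
    obtain ⟨v, hv, hv0⟩ := (Matrix.exists_mulVec_eq_zero_iff).2 h
    rw [sub_mulVec, one_mulVec, sub_eq_zero] at hv0
    exact hfix v hv hv0
  have hunit : IsUnit (M - 1) := (Matrix.isUnit_iff_isUnit_det _).2 (isUnit_iff_ne_zero.2 hdet)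
  have h := geom_sum_mul M m
  rw [hMm, sub_self] at h
  exact (hunit.mul_left_eq_zero).mp h

lemma aux_no_free_pair {N p : ℕ} (hN : 0 < N) (hp : p.Prime)
    (A B : Matrix (Fin N) (Fin N) ℝ) (hcomm : Commute A B)
    (hBp : B ^ p = 1)
    (hB : ∑ j ∈ range p, B ^ j = 0)
    (hAB : ∀ m < p, ∑ i ∈ range p, (A * B ^ m) ^ i = 0) : False := by
  haveI : Fact p.Prime := ⟨hp⟩
  have hpow_mod : ∀ t : ℕ, B ^ t = B ^ (t % p) := by
    intro t
    conv_lhs => rw [← Nat.div_add_mod t p]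
    rw [pow_add, pow_mul, hBp, one_pow, one_mul]
  have hsum_zmod : ∑ k : ZMod p, B ^ (k.val) = 0 := by
    rw [← hB]
    refine Finset.sum_nbij' (fun k => k.val) (fun j => (j : ZMod p)) ?_ ?_ ?_ ?_ ?_
    · intro k _; exact Finset.mem_range.2 (ZMod.val_lt k)
    · intro j _; exact Finset.mem_univ _
    · intro k _; exact ZMod.natCast_rightInverse k
    · intro j hj; exact ZMod.val_natCast_of_lt (Finset.mem_range.1 hj)
    · intro k _; rfl
  have hinner : ∀ i, i ≠ 0 → i < p → ∑ m : ZMod p, B ^ (m.val * i) = 0 := by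
    intro i hi hip
    have hiu : (i : ZMod p) ≠ 0 := by
      intro h
      rw [ZMod.natCast_eq_zero_iff] at h
      exact Nat.not_dvd_of_pos_of_lt (Nat.pos_of_ne_zero hi) hip h
    calc ∑ m : ZMod p, B ^ (m.val * i)
        = ∑ m : ZMod p, B ^ ((m * (i : ZMod p)).val) := by
          refine Finset.sum_congr rfl fun m _ => ?_
          rw [hpow_mod (m.val * i), ZMod.val_mul, ZMod.val_natCast_of_lt hip]
      _ = ∑ m : ZMod p, B ^ (m.val) := Fintype.sum_equiv (Equiv.mulRight₀ (i : ZMod p) hiu)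
            _ _ (fun m => rfl)
      _ = 0 := hsum_zmod
  have hT : ∑ m : ZMod p, ∑ i ∈ range p, A ^ i * B ^ (m.val * i) = 0 := by
    refine Finset.sum_eq_zero fun m _ => ?_
    have := hAB m.val (ZMod.val_lt m)
    calc ∑ i ∈ range p, A ^ i * B ^ (m.val * i)
        = ∑ i ∈ range p, (A * B ^ m.val) ^ i := by
          refine Finset.sum_congr rfl fun i _ => ?_
          rw [(hcomm.pow_right m.val).mul_pow, ← pow_mul, mul_comm (m.val) i]
      _ = 0 := this
  rw [Finset.sum_comm] at hT
  have hT2 : ∑ i ∈ range p, A ^ i * (∑ m : ZMod p, B ^ (m.val * i)) = 0 := by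
    simpa [Finset.mul_sum] using hT
  have hfinal : (p : ℕ) • (1 : Matrix (Fin N) (Fin N) ℝ) = 0 := by
    rw [Finset.sum_eq_single_of_mem 0 (Finset.mem_range.2 hp.pos)] at hT2
    · simpa [ZMod.card] using hT2
    · intro i hi hine
      rw [hinner i hine (Finset.mem_range.1 hi), mul_zero]
  have hp0 : (p : ℝ) = 0 := by
    have := congrFun (congrFun hfinal ⟨0, hN⟩) ⟨0, hN⟩
    simpa [Matrix.smul_apply, Matrix.one_apply_eq] using this
  exact (Nat.cast_ne_zero (R := ℝ)).2 hp.pos.ne' hp0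

/-- A finite group of order `p²` (`p` prime) acting freely by orthogonal transformations on the
unit sphere `S^(2n-1) ⊂ ℝ^(2n)`, `n ≥ 2` (no nontrivial element fixes a nonzero vector),
is cyclic. -/
theorem cyclic_of_p_squared_free_sphere_action
    (n p : ℕ) (hn : 2 ≤ n) (hp : p.Prime)
    (H : Subgroup (Matrix.orthogonalGroup (Fin (2*n)) ℝ))
    (hcard : Nat.card H = p^2)
    (hfree : ∀ h ∈ H, h ≠ 1 → ∀ v : Fin (2*n) → ℝ, v ≠ 0 →
      Matrix.mulVec (h : Matrix (Fin (2*n)) (Fin (2*n)) ℝ) v ≠ v) :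
    IsCyclic H := by
  by_contra hnc
  haveI : Fact p.Prime := ⟨hp⟩
  haveI hfin : Finite H := Nat.finite_of_card_ne_zero (by rw [hcard]; exact pow_ne_zero 2 hp.pos.ne')
  have hcomm := IsPGroup.commutative_of_card_eq_prime_sq hcard
  -- every element has order dividing p
  have hexp : ∀ g : H, g ^ p = 1 := by
    intro g
    have hdvd : orderOf g ∣ p ^ 2 := hcard ▸ orderOf_dvd_natCard g
    obtain ⟨k, hk, hke⟩ := (Nat.dvd_prime_pow hp).1 hdvd
    interval_cases k
    · rw [pow_zero] at hke
      rw [orderOf_eq_one_iff.1 hke, one_pow]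
    · rw [pow_one] at hke
      exact orderOf_dvd_iff_pow_eq_one.1 (hke ▸ dvd_rfl)
    · exact absurd (isCyclic_of_orderOf_eq_card g (by rw [hke, hcard])) hnc
  have horder : ∀ g : H, g ≠ 1 → orderOf g = p := by
    intro g hg
    rcases (Nat.Prime.eq_one_or_self_of_dvd hp _ (orderOf_dvd_iff_pow_eq_one.2 (hexp g))) with h | h
    · exact absurd (orderOf_eq_one_iff.1 h) hg
    · exact h
  haveI : Nontrivial H := by
    have : 1 < Nat.card H := by
      rw [hcard]
      exact Nat.one_lt_pow (by norm_num) hp.one_lt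
    exact (Finite.one_lt_card_iff_nontrivial).1 this
  obtain ⟨x, hx1⟩ := exists_ne (1 : H)
  -- find y outside zpowers x
  have hcx : Nat.card (Subgroup.zpowers x) = p := by
    rw [Nat.card_zpowers, horder x hx1]
  obtain ⟨y, hy⟩ : ∃ y : H, y ∉ Subgroup.zpowers x := by
    by_contra hall
    push_neg at hall
    have : Subgroup.zpowers x = ⊤ := (Subgroup.eq_top_iff' _).2 hall
    rw [this, Subgroup.card_top, hcard] at hcx
    exact absurd hcx.symm (by nlinarith [hp.two_le])
  have hy1 : y ≠ 1 := fun h => hy (h ▸ Subgroup.one_mem _)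
  have hcy : Nat.card (Subgroup.zpowers y) = p := by
    rw [Nat.card_zpowers, horder y hy1]
  -- x * y ^ m ≠ 1 for all m
  have hxym : ∀ m : ℕ, x * y ^ m ≠ 1 := by
    intro m hm
    have hxy : x ∈ Subgroup.zpowers y := by
      have : x = (y ^ m)⁻¹ := by
        rw [eq_inv_iff_mul_eq_one]; exact hm
      rw [this]
      exact Subgroup.inv_mem _ (Subgroup.pow_mem _ (Subgroup.mem_zpowers y) m)
    have hle : Subgroup.zpowers x ≤ Subgroup.zpowers y := Subgroup.zpowers_le.2 hxy
    have heq : Subgroup.zpowers x = Subgroup.zpowers y :=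
      Subgroup.eq_of_le_of_card_ge hle (by rw [hcx, hcy])
    exact hy (heq ▸ Subgroup.mem_zpowers y)
  -- pass to matrices
  set G := Matrix.orthogonalGroup (Fin (2*n)) ℝ
  let φ : H → Matrix (Fin (2*n)) (Fin (2*n)) ℝ := fun g => ((g : G) : Matrix (Fin (2*n)) (Fin (2*n)) ℝ)
  have hφmul : ∀ g g' : H, φ (g * g') = φ g * φ g' := by intro g g'; push_cast [φ]; rfl
  have hφpow : ∀ (g : H) (k : ℕ), φ (g ^ k) = (φ g) ^ k := by intro g k; push_cast [φ]; rfl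
  have hφone : φ 1 = 1 := by push_cast [φ]; rfl
  have hφne : ∀ g : H, g ≠ 1 → (g : G) ≠ 1 := by
    intro g hg h
    exact hg (Subtype.coe_injective h)
  have hfix : ∀ g : H, g ≠ 1 → ∀ v : Fin (2*n) → ℝ, v ≠ 0 → (φ g).mulVec v ≠ v := by
    intro g hg
    exact hfree (g : G) (SetLike.coe_mem g) (hφne g hg)
  have hAcomm : Commute (φ x) (φ y) := by
    have := hcomm x y
    calc φ x * φ y = φ (x * y) := (hφmul x y).symm
      _ = φ (y * x) := by rw [this]
      _ = φ y * φ x := hφmul y x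
  have hBp : (φ y) ^ p = 1 := by rw [← hφpow, hexp y, hφone]
  have hB : ∑ j ∈ range p, (φ y) ^ j = 0 := aux_sum_pow_eq_zero (φ y) p hBp (hfix y hy1)
  have hAB : ∀ m < p, ∑ i ∈ range p, (φ x * (φ y) ^ m) ^ i = 0 := by
    intro m _
    have hg : φ (x * y ^ m) = φ x * (φ y) ^ m := by rw [hφmul, hφpow]
    have hgp : (φ x * (φ y) ^ m) ^ p = 1 := by
      rw [← hg, ← hφpow, hexp (x * y ^ m), hφone]
    exact aux_sum_pow_eq_zero _ p hgp (hg ▸ hfix (x * y ^ m) (hxym m))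
  exact aux_no_free_pair (by omega) hp (φ x) (φ y) hAcomm hBp hB hAB
end

section
/- Let G be a finite subgroup of O(2n+1) with n ≥ 2 such that every nontrivial element has at most one eigenvalue equal to 1 (eigenspace of eigenvalue 1 of dimension at most 1). Let G₀ = G ∩ SO(2n+1) and suppose G₀ ≠ G. If v is a unit vector fixed by every element of G₀, then every g ∈ G \ G₀ satisfies g(v) = -v. -/
open Module LinearMap RealInnerProductSpace

namespace LinearMap

theorem det_adjoint {𝕜 V : Type*} [RCLike 𝕜] [NormedAddCommGroup V] [InnerProductSpace 𝕜 V]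
    [FiniteDimensional 𝕜 V] (f : V →ₗ[𝕜] V) : LinearMap.det f.adjoint = star (LinearMap.det f) := by
  let b := (stdOrthonormalBasis 𝕜 V).toBasis
  rw [← det_toMatrix b, ← det_toMatrix b f, toMatrix_adjoint, Matrix.det_conjTranspose]

variable {V : Type*} [NormedAddCommGroup V] [InnerProductSpace ℝ V] {f : V →ₗ[ℝ] V}

theorem apply_sub_self_mem_orthogonal_eigenspace_one (hf : ∀ x y, ⟪f x, f y⟫ = ⟪x, y⟫) (x : V) :
    f x - x ∈ (Module.End.eigenspace f 1)ᗮ := by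
  intro u hu
  rw [Module.End.mem_eigenspace_iff, one_smul] at hu
  rw [inner_sub_right, ← hf u x, hu, sub_self]

variable [FiniteDimensional ℝ V]

theorem adjoint_mul_self_eq_one (hf : ∀ x y, ⟪f x, f y⟫ = ⟪x, y⟫) : f.adjoint * f = 1 := by
  ext x
  refine ext_inner_right ℝ fun y ↦ ?_
  simp [adjoint_inner_left, hf]

theorem det_eq_neg_one_pow_of_eigenspace_one_eq_bot (hf : ∀ x y, ⟪f x, f y⟫ = ⟪x, y⟫)
    (hfix : Module.End.eigenspace f 1 = ⊥) : LinearMap.det f = (-1) ^ finrank ℝ V := by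
  have hdet : LinearMap.det (f - 1) ≠ 0 := by
    rwa [Ne, det_eq_zero_iff_ker_ne_bot, not_not, ← one_smul ℝ (1 : V →ₗ[ℝ] V),
      ← Module.End.eigenspace_def]
  have hfactor : f - 1 = (-1 : ℝ) • (f * (f - 1).adjoint) := by
    rw [map_sub, adjoint_one, mul_sub, mul_one, mul_eq_one_comm.mp (adjoint_mul_self_eq_one hf)]
    module
  have h := congrArg LinearMap.det hfactor
  rw [det_smul, map_mul, det_adjoint, star_trivial, ← mul_assoc] at h
  have h1 : LinearMap.det f * (-1) ^ finrank ℝ V = 1 := by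
    simpa [mul_comm] using (mul_left_eq_self₀.mp h.symm).resolve_right hdet
  rw [eq_inv_of_mul_eq_one_left h1, ← inv_pow, inv_neg_one]

theorem det_eq_neg_one_pow_finrank_orthogonal_eigenspace_one
    (hf : ∀ x y, ⟪f x, f y⟫ = ⟪x, y⟫) :
    LinearMap.det f = (-1) ^ finrank ℝ (Module.End.eigenspace f 1)ᗮ := by
  set W := (Module.End.eigenspace f 1)ᗮ
  have hmove := apply_sub_self_mem_orthogonal_eigenspace_one hf
  have hW : W ≤ W.comap f := fun x hx ↦ by simpa using W.add_mem (hmove x) hx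
  have hquot : W.mapQ W f hW = LinearMap.id :=
    W.quot_hom_ext _ _ fun x ↦ (Submodule.Quotient.eq W).mpr (hmove x)
  have hfix : Module.End.eigenspace (f.restrict hW) 1 = ⊥ := by
    refine (Submodule.eq_bot_iff _).mpr fun x hx ↦ ?_
    rw [Module.End.mem_eigenspace_iff, one_smul, Subtype.ext_iff, coe_restrict_apply] at hx
    have hxE : (x : V) ∈ Module.End.eigenspace f 1 := by
      rwa [Module.End.mem_eigenspace_iff, one_smul]
    exact Subtype.ext ((Submodule.orthogonal_disjoint _).le_bot ⟨hxE, x.2⟩)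
  rw [det_eq_det_mul_det W f hW, hquot, det_id, mul_one,
    det_eq_neg_one_pow_of_eigenspace_one_eq_bot (f := f.restrict hW) (fun x y ↦ hf x y) hfix]

theorem eigenspace_one_eq_bot_of_det_eq_neg_one (hf : ∀ x y, ⟪f x, f y⟫ = ⟪x, y⟫)
    (hodd : Odd (finrank ℝ V)) (hdet : LinearMap.det f = -1)
    (hdim : finrank ℝ (Module.End.eigenspace f 1) ≤ 1) :
    Module.End.eigenspace f 1 = ⊥ := by
  rw [det_eq_neg_one_pow_finrank_orthogonal_eigenspace_one hf,
    neg_one_pow_eq_neg_one_iff_odd (by norm_num)] at hdet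
  have hsum := (Module.End.eigenspace f 1).finrank_add_finrank_orthogonal
  obtain ⟨a, ha⟩ := hodd
  obtain ⟨b, hb⟩ := hdet
  exact Submodule.finrank_eq_zero.mp (by omega)

end LinearMap

namespace Matrix

open WithLp (toLp)

theorem finrank_eigenspace_toLpLin {n R : Type*} [Fintype n] [DecidableEq n] [CommRing R]
    (p : ENNReal) (A : Matrix n n R) (μ : R) :
    finrank R (Module.End.eigenspace (toLpLin p p A) μ) =
      finrank R (Module.End.eigenspace (toLin' A) μ) := by
  have hmap : (Module.End.eigenspace (toLpLin p p A) μ).map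
      (WithLp.linearEquiv p R (n → R)).toLinearMap = Module.End.eigenspace (toLin' A) μ := by
    ext x
    simp [Submodule.mem_map_equiv, ← WithLp.toLp_smul]
  rw [← hmap, LinearEquiv.finrank_map_eq]

variable {n : Type*} [Fintype n] [DecidableEq n] {A : Matrix n n ℝ}

theorem det_eq_neg_one_of_mem_orthogonalGroup (hA : A ∈ orthogonalGroup n ℝ) (h : A.det ≠ 1) :
    A.det = -1 :=
  (mul_self_eq_one_iff.mp (Unitary.star_mul_self_of_mem (det_of_mem_unitary hA))).resolve_left h

theorem inner_toEuclideanLin_toEuclideanLin (hA : A ∈ orthogonalGroup n ℝ)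
    (x y : EuclideanSpace ℝ n) : ⟪toEuclideanLin A x, toEuclideanLin A y⟫ = ⟪x, y⟫ := by
  rw [← adjoint_inner_left, ← toEuclideanLin_conjTranspose_eq_adjoint, ← LinearMap.comp_apply,
    ← toLpLin_mul_same, ← star_eq_conjTranspose, mem_unitaryGroup_iff'.mp hA, toLpLin_one,
    LinearMap.id_apply]

theorem eq_zero_of_mulVec_eq_self {m : ℕ} {A : Matrix (Fin m) (Fin m) ℝ}
    (hA : A ∈ orthogonalGroup (Fin m) ℝ) (hm : Odd m) (hdet : A.det = -1)
    (hdim : fixedSpaceDim A ≤ 1) {x : Fin m → ℝ} (hx : A *ᵥ x = x) : x = 0 := by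
  have hbot := LinearMap.eigenspace_one_eq_bot_of_det_eq_neg_one
    (inner_toEuclideanLin_toEuclideanLin hA) (by rwa [finrank_euclideanSpace_fin])
    (by rwa [toEuclideanLin_eq_toLin_orthonormal, LinearMap.det_toLin])
    (by rwa [finrank_eigenspace_toLpLin])
  have hmem : toLp 2 x ∈ Module.End.eigenspace (toEuclideanLin A) 1 := by
    simp [hx]
  simpa [hbot] using hmem

end Matrix

theorem reflection_on_fixed_vector_general
    (n : ℕ)
    (G : Subgroup (Matrix.orthogonalGroup (Fin (2*n+1)) ℝ))
    (heig : ∀ g ∈ G, g ≠ 1 →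
      fixedSpaceDim (g : Matrix (Fin (2*n+1)) (Fin (2*n+1)) ℝ) ≤ 1)
    (v : Fin (2*n+1) → ℝ)
    (hfix : ∀ g ∈ G, ((g : Matrix (Fin (2*n+1)) (Fin (2*n+1)) ℝ)).det = 1 →
      Matrix.mulVec (g : Matrix (Fin (2*n+1)) (Fin (2*n+1)) ℝ) v = v) :
    ∀ g ∈ G, ((g : Matrix (Fin (2*n+1)) (Fin (2*n+1)) ℝ)).det ≠ 1 →
      Matrix.mulVec (g : Matrix (Fin (2*n+1)) (Fin (2*n+1)) ℝ) v = -v := by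
  intro g hg hdet
  set A : Matrix (Fin (2*n+1)) (Fin (2*n+1)) ℝ := ↑g
  have hdetA : A.det = -1 := Matrix.det_eq_neg_one_of_mem_orthogonalGroup g.2 hdet
  have hsq : A.mulVec (A.mulVec v) = v := by
    rw [Matrix.mulVec_mulVec]
    exact hfix (g * g) (mul_mem hg hg) (by simp [A, hdetA])
  have hne : g ≠ 1 := by
    rintro rfl
    simp [A] at hdet
  have hsum : v + A.mulVec v = 0 :=
    Matrix.eq_zero_of_mulVec_eq_self g.2 (odd_two_mul_add_one n) hdetA (heig g hg hne)
      (by rw [Matrix.mulVec_add, hsq]; exact add_comm _ _)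
  exact (neg_eq_of_add_eq_zero_right hsum).symm

/-- Let `G` be a finite subgroup of `O(2n+1)`, `n ≥ 2`, with every nontrivial element having
at most one eigenvalue `1`. Let `G₀ = G ∩ SO(2n+1)` (the determinant-one elements) and suppose
`G₀ ≠ G`. If a unit vector `v` is fixed by every element of `G₀`, then every
`g ∈ G \ G₀` satisfies `g(v) = -v`. -/
theorem reflection_on_fixed_vector
    (n : ℕ) (hn : 2 ≤ n)
    (G : Subgroup (Matrix.orthogonalGroup (Fin (2*n+1)) ℝ)) (hG : Finite G)
    (heig : ∀ g ∈ G, g ≠ 1 →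
      fixedSpaceDim (g : Matrix (Fin (2*n+1)) (Fin (2*n+1)) ℝ) ≤ 1)
    (hproper : ∃ g ∈ G, ((g : Matrix (Fin (2*n+1)) (Fin (2*n+1)) ℝ)).det ≠ 1)
    (v : Fin (2*n+1) → ℝ) (hv : dotProduct v v = 1)
    (hfix : ∀ g ∈ G, ((g : Matrix (Fin (2*n+1)) (Fin (2*n+1)) ℝ)).det = 1 →
      Matrix.mulVec (g : Matrix (Fin (2*n+1)) (Fin (2*n+1)) ℝ) v = v) :
    ∀ g ∈ G, ((g : Matrix (Fin (2*n+1)) (Fin (2*n+1)) ℝ)).det ≠ 1 →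
      Matrix.mulVec (g : Matrix (Fin (2*n+1)) (Fin (2*n+1)) ℝ) v = -v :=
  reflection_on_fixed_vector_general n G heig v hfix
end

section
/- Let g be an element of a finite subgroup G ⊂ SO(2n+1), n ≥ 2, in which every nontrivial element has eigenspace of eigenvalue 1 of dimension exactly one. Suppose g(v) = -v for some unit vector v with v not an eigenvector of eigenvalue 1 of g. Then g has order 2. -/
theorem linearIndependent_pair_of_apply_eq_self_of_apply_ne_self {K V : Type*} [DivisionRing K]
    [AddCommGroup V] [Module K V] {f : V →ₗ[K] V} {u v : V} (hu0 : u ≠ 0) (hfu : f u = u)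
    (hfv : f v ≠ v) : LinearIndependent K ![u, v] := by
  rw [LinearIndependent.pair_iff' hu0]
  rintro a rfl
  exact hfv (by rw [map_smul, hfu])

namespace Matrix

variable {m : ℕ} {A : Matrix (Fin m) (Fin m) ℝ}

theorem mem_eigenspace_toLin'_one_iff {x : Fin m → ℝ} :
    x ∈ Module.End.eigenspace (toLin' A) 1 ↔ A *ᵥ x = x := by
  rw [Module.End.mem_eigenspace_iff, toLin'_apply, one_smul]

theorem exists_ne_zero_mulVec_eq_self_of_fixedSpaceDim_pos (h : 0 < fixedSpaceDim A) :
    ∃ u ≠ 0, A *ᵥ u = u := by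
  obtain ⟨⟨u, hu⟩, hu0⟩ := Module.finrank_pos_iff_exists_ne_zero.mp h
  exact ⟨u, fun h0 => hu0 (Subtype.ext h0), mem_eigenspace_toLin'_one_iff.mp hu⟩

theorem two_le_fixedSpaceDim {u v : Fin m → ℝ} (huv : LinearIndependent ℝ ![u, v])
    (hAu : A *ᵥ u = u) (hAv : A *ᵥ v = v) : 2 ≤ fixedSpaceDim A := by
  have hspan : Submodule.span ℝ (Set.range ![u, v]) ≤ Module.End.eigenspace (toLin' A) 1 := by
    rw [Submodule.span_le, Set.range_subset_iff]
    intro i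
    fin_cases i
    · exact mem_eigenspace_toLin'_one_iff.mpr hAu
    · exact mem_eigenspace_toLin'_one_iff.mpr hAv
  simpa [fixedSpaceDim, finrank_span_eq_card huv] using Submodule.finrank_mono hspan

end Matrix

open Matrix in
theorem order_two_of_antifixed_vector_general
    (n : ℕ)
    (G : Subgroup (Matrix.orthogonalGroup (Fin (2*n+1)) ℝ))
    (heig : ∀ h ∈ G, h ≠ 1 →
      fixedSpaceDim (h : Matrix (Fin (2*n+1)) (Fin (2*n+1)) ℝ) = 1)
    (g : Matrix.orthogonalGroup (Fin (2*n+1)) ℝ) (hg : g ∈ G)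
    (v : Fin (2*n+1) → ℝ)
    (hgv : Matrix.mulVec (g : Matrix (Fin (2*n+1)) (Fin (2*n+1)) ℝ) v = -v)
    (hnotfix : Matrix.mulVec (g : Matrix (Fin (2*n+1)) (Fin (2*n+1)) ℝ) v ≠ v) :
    orderOf g = 2 := by
  have hg1 : g ≠ 1 := by
    rintro rfl
    exact hnotfix (one_mulVec v)
  obtain ⟨u, hu0, hgu⟩ :=
    exists_ne_zero_mulVec_eq_self_of_fixedSpaceDim_pos (by rw [heig g hg hg1]; exact one_pos)
  have huv : LinearIndependent ℝ ![u, v] :=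
    linearIndependent_pair_of_apply_eq_self_of_apply_ne_self (f := toLin' _) hu0
      (by rwa [toLin'_apply]) (by rwa [toLin'_apply])
  have hsq : g * g = 1 := by
    by_contra hsq
    have h2 : 2 ≤ fixedSpaceDim ((g * g : orthogonalGroup (Fin (2*n+1)) ℝ) : Matrix _ _ ℝ) :=
      two_le_fixedSpaceDim huv (by simp [← mulVec_mulVec, hgu])
        (by simp [← mulVec_mulVec, mulVec_neg, hgv])
    rw [heig _ (mul_mem hg hg) hsq] at h2
    omega
  exact orderOf_eq_prime (by rwa [sq]) hg1

/-- Let `G` be a finite subgroup of `SO(2n+1)`, `n ≥ 2`, in which every nontrivial element has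
eigenspace of eigenvalue `1` of dimension exactly one. If `g ∈ G` sends some unit vector `v`
to `-v` (so `v` is not a fixed vector of `g`), then `g` has order `2`. -/
theorem order_two_of_antifixed_vector
    (n : ℕ) (hn : 2 ≤ n)
    (G : Subgroup (Matrix.orthogonalGroup (Fin (2*n+1)) ℝ)) (hG : Finite G)
    (hdet : ∀ h ∈ G, ((h : Matrix (Fin (2*n+1)) (Fin (2*n+1)) ℝ)).det = 1)
    (heig : ∀ h ∈ G, h ≠ 1 →
      fixedSpaceDim (h : Matrix (Fin (2*n+1)) (Fin (2*n+1)) ℝ) = 1)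
    (g : Matrix.orthogonalGroup (Fin (2*n+1)) ℝ) (hg : g ∈ G)
    (v : Fin (2*n+1) → ℝ) (hv : dotProduct v v = 1)
    (hgv : Matrix.mulVec (g : Matrix (Fin (2*n+1)) (Fin (2*n+1)) ℝ) v = -v)
    (hnotfix : Matrix.mulVec (g : Matrix (Fin (2*n+1)) (Fin (2*n+1)) ℝ) v ≠ v) :
    orderOf g = 2 :=
  order_two_of_antifixed_vector_general n G heig g hg v hgv hnotfix
end

section
/- Let G be a group acting by isometries on the metric space S³ × ℝ (standard product metric) cocompactly and fixed point freely, with G discrete. Then G contains an element g whose action on the ℝ factor is a nontrivial translation, and the infinite cyclic subgroup generated by g has finite index in G. In particular, G is virtually infinite cyclic. -/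
/-- The metric space `S³ × ℝ` with the standard product metric. -/
abbrev S3xR : Type := (Metric.sphere (0 : EuclideanSpace ℝ (Fin 4)) 1) × ℝ

/-!
If `X` is bounded and `R > diam X`, the sphere of radius `R` about `(x, s)` in `X × ℝ` is
`X × {s - R, s + R}`, whatever `x` is. Isometries map spheres to spheres, so every isometry of
`X × ℝ` acts on the `ℝ`-coordinate through an isometry `s ↦ ±s + a` of the line.

If every point can be moved into a compact set whose `ℝ`-coordinates lie in `[-M, M]`, pick
elements moving the levels `M + 1` and `-(M + 1)` into that window: one of them is a nontrivial
translation, or both are reflections about distinct centres and their product is one. For a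
translation `g` by `a ≠ 0`, every coset `k⟨g⟩` contains an element mapping some point of the
compact set `X × [-|a|, |a|]` into that set, and discreteness leaves only finitely many of those.
-/

open Metric Set

variable {X : Type*}

theorem Real.exists_eq_sign_mul_add_of_isometry {φ : ℝ → ℝ} (hφ : Isometry φ) :
    ∃ ε a : ℝ, (ε = 1 ∨ ε = -1) ∧ ∀ s, φ s = ε * s + a := by
  set ε := φ 1 - φ 0
  have hε : ε ^ 2 = 1 := by
    rw [← sq_abs, ← Real.dist_eq, hφ.dist_eq, Real.dist_eq]; norm_num
  refine ⟨ε, φ 0, by simpa using hε, fun s => ?_⟩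
  have h0 : (φ s - φ 0) ^ 2 = s ^ 2 := by
    rw [← sq_abs, ← Real.dist_eq, hφ.dist_eq, Real.dist_eq, sq_abs, sub_zero]
  have h1 : (φ s - φ 1) ^ 2 = (s - 1) ^ 2 := by
    rw [← sq_abs, ← Real.dist_eq, hφ.dist_eq, Real.dist_eq, sq_abs]
  linear_combination (ε / 2 - (φ s - φ 0)) * hε + ε / 2 * h0 - ε / 2 * h1

theorem exists_int_abs_sub_mul_le {α : Type*} [Field α] [LinearOrder α] [IsStrictOrderedRing α]
    [FloorRing α] (c : α) {a : α} (ha : a ≠ 0) : ∃ n : ℤ, |c - n * a| ≤ |a| := by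
  refine ⟨round (c / a), ?_⟩
  have h : c - round (c / a) * a = a * (c / a - round (c / a)) := by field_simp
  rw [h, abs_mul]
  calc |a| * |c / a - round (c / a)| ≤ |a| * (1 / 2) :=
        mul_le_mul_of_nonneg_left (abs_sub_round _) (abs_nonneg a)
    _ ≤ |a| := by linarith [abs_nonneg a]

theorem Metric.sphere_prod_real_of_diam_lt [PseudoMetricSpace X] [BoundedSpace X] (p : X × ℝ)
    {R : ℝ} (hR : diam (univ : Set X) < R) :
    sphere p R = univ ×ˢ sphere p.2 R := by
  ext q
  have hq : dist q.1 p.1 < R :=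
    (dist_le_diam_of_mem (Bornology.IsBounded.all _) (mem_univ _) (mem_univ _)).trans_lt hR
  simp only [mem_sphere, Prod.dist_eq, mem_prod, mem_univ, true_and]
  constructor
  · intro h
    rcases max_choice (dist q.1 p.1) (dist q.2 p.2) with h' | h' <;> rw [h'] at h
    · exact absurd h hq.ne
    · exact h
  · intro h
    rw [h, max_eq_right hq.le]

namespace IsometryEquiv

theorem snd_zpow_apply [PseudoEMetricSpace X] {f : X × ℝ ≃ᵢ X × ℝ} {a : ℝ}
    (hf : ∀ p : X × ℝ, (f p).2 = p.2 + a) (n : ℤ) (p : X × ℝ) :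
    ((f ^ n) p).2 = p.2 + n * a := by
  induction n using Int.induction_on generalizing p with
  | zero => simp
  | succ n ih => rw [zpow_add_one, mul_apply, ih, hf]; push_cast; ring
  | pred n ih =>
    have hinv : (f⁻¹ p).2 = p.2 - a := by
      have := hf (f⁻¹ p)
      rw [apply_inv_self] at this
      linarith
    rw [zpow_sub_one, mul_apply, ih, hinv]; push_cast; ring

section Bounded

variable [PseudoMetricSpace X] [BoundedSpace X]

theorem snd_apply_eq_of_snd_eq (f : X × ℝ ≃ᵢ X × ℝ) {p q : X × ℝ} (h : p.2 = q.2) :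
    (f p).2 = (f q).2 := by
  set R := diam (univ : Set X) + 1
  have hR : diam (univ : Set X) < R := lt_add_one _
  have hspheres : (univ : Set X) ×ˢ sphere (f p).2 R = univ ×ˢ sphere (f q).2 R := by
    rw [← sphere_prod_real_of_diam_lt _ hR, ← sphere_prod_real_of_diam_lt _ hR,
      ← f.image_sphere, ← f.image_sphere, sphere_prod_real_of_diam_lt _ hR,
      sphere_prod_real_of_diam_lt _ hR, h]
  have hmem (c : ℝ) (hc : dist c (f p).2 = R) : dist c (f q).2 = R := by
    have : ((f p).1, c) ∈ univ ×ˢ sphere (f q).2 R := hspheres ▸ ⟨mem_univ _, hc⟩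
    exact this.2
  have hR0 : 0 < R := diam_nonneg.trans_lt hR
  have hplus := hmem ((f p).2 + R) (by simp [hR0.le])
  have hminus := hmem ((f p).2 - R) (by simp [hR0.le])
  rw [Real.dist_eq, abs_eq hR0.le] at hplus hminus
  rcases hplus with h₁ | h₁ <;> rcases hminus with h₂ | h₂ <;> linarith

theorem dist_snd_apply (f : X × ℝ ≃ᵢ X × ℝ) (p q : X × ℝ) :
    dist (f p).2 (f q).2 = dist p.2 q.2 := by
  have hle (f : X × ℝ ≃ᵢ X × ℝ) (p q : X × ℝ) : dist (f p).2 (f q).2 ≤ dist p.2 q.2 := by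
    rw [f.snd_apply_eq_of_snd_eq (p := p) (q := (q.1, p.2)) rfl]
    calc dist (f (q.1, p.2)).2 (f q).2 ≤ dist (f (q.1, p.2)) (f q) := by
          rw [Prod.dist_eq]; exact le_max_right _ _
      _ = dist p.2 q.2 := by rw [f.dist_eq]; exact dist_prod_same_left
  refine (hle f p q).antisymm ?_
  simpa using hle f.symm (f p) (f q)

theorem exists_snd_apply_eq_sign_mul_add [Nonempty X] (f : X × ℝ ≃ᵢ X × ℝ) :
    ∃ ε a : ℝ, (ε = 1 ∨ ε = -1) ∧ ∀ p : X × ℝ, (f p).2 = ε * p.2 + a := by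
  obtain ⟨x₀⟩ := ‹Nonempty X›
  obtain ⟨ε, a, hε, hφ⟩ := Real.exists_eq_sign_mul_add_of_isometry
    (φ := fun s => (f (x₀, s)).2)
    (Isometry.of_dist_eq fun s t => f.dist_snd_apply (x₀, s) (x₀, t))
  refine ⟨ε, a, hε, fun p => ?_⟩
  rw [f.snd_apply_eq_of_snd_eq (p := p) (q := (x₀, p.2)) rfl, hφ]

end Bounded

end IsometryEquiv

open IsometryEquiv

theorem exists_mem_translation_of_cocompact [PseudoMetricSpace X] [BoundedSpace X] [Nonempty X]
    (G : Subgroup (X × ℝ ≃ᵢ X × ℝ))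
    (hcocompact : ∃ K : Set (X × ℝ), IsCompact K ∧ ∀ x : X × ℝ, ∃ g ∈ G, g x ∈ K) :
    ∃ g ∈ G, ∃ a : ℝ, a ≠ 0 ∧ ∀ p : X × ℝ, (g p).2 = p.2 + a := by
  obtain ⟨K, hK, hGK⟩ := hcocompact
  obtain ⟨M, hM⟩ := hK.exists_bound_of_continuousOn continuous_snd.continuousOn
  obtain ⟨x₀⟩ := ‹Nonempty X›
  have hlevel (s : ℝ) : ∃ g ∈ G, ∃ ε a : ℝ, (ε = 1 ∨ ε = -1) ∧
      (∀ p : X × ℝ, (g p).2 = ε * p.2 + a) ∧ |ε * s + a| ≤ M := by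
    obtain ⟨g, hg, hgK⟩ := hGK (x₀, s)
    obtain ⟨ε, a, hε, hga⟩ := g.exists_snd_apply_eq_sign_mul_add
    exact ⟨g, hg, ε, a, hε, hga, by simpa [hga] using hM _ hgK⟩
  obtain ⟨g, hg, ε, a, hε | hε, hga, hgM⟩ := hlevel (M + 1) <;>
    rw [hε, abs_le] at hgM
  · exact ⟨g, hg, a, by linarith, by simpa [hε] using hga⟩
  obtain ⟨h, hh, ε', b, hε' | hε', hhb, hhM⟩ := hlevel (-(M + 1)) <;>
    rw [hε', abs_le] at hhM
  · exact ⟨h, hh, b, by linarith, by simpa [hε'] using hhb⟩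
  refine ⟨g * h, mul_mem hg hh, a - b, by linarith, fun p => ?_⟩
  rw [mul_apply, hga, hhb, hε, hε']
  ring

theorem finiteIndex_zpowers_of_translation [PseudoEMetricSpace X] [CompactSpace X] [Nonempty X]
    (G : Subgroup (X × ℝ ≃ᵢ X × ℝ))
    (hdisc : ∀ K : Set (X × ℝ), IsCompact K →
      {g : G | ∃ x ∈ K, (g : X × ℝ ≃ᵢ X × ℝ) x ∈ K}.Finite)
    {g : X × ℝ ≃ᵢ X × ℝ} (hg : g ∈ G) {a : ℝ} (ha : a ≠ 0)
    (hga : ∀ p : X × ℝ, (g p).2 = p.2 + a) :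
    (Subgroup.zpowers (⟨g, hg⟩ : G)).FiniteIndex := by
  obtain ⟨x₀⟩ := ‹Nonempty X›
  set K : Set (X × ℝ) := univ ×ˢ closedBall 0 |a|
  set S := {k : G | ∃ x ∈ K, (k : X × ℝ ≃ᵢ X × ℝ) x ∈ K}
  have hS : S.Finite := hdisc K (isCompact_univ.prod (isCompact_closedBall 0 |a|))
  have hcoset (k : G) : ∃ n : ℤ, k * ⟨g, hg⟩ ^ n ∈ S := by
    obtain ⟨n, hn⟩ :=
      exists_int_abs_sub_mul_le (((k⁻¹ : G) : X × ℝ ≃ᵢ X × ℝ) (x₀, 0)).2 ha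
    refine ⟨n, (((k * ⟨g, hg⟩ ^ n)⁻¹ : G) : X × ℝ ≃ᵢ X × ℝ) (x₀, 0),
      ⟨mem_univ _, ?_⟩, ⟨mem_univ _, ?_⟩⟩
    · simpa [mul_apply, ← zpow_neg, snd_zpow_apply hga, ← sub_eq_add_neg] using hn
    · simp
  have := hS.to_subtype
  have : Finite (G ⧸ Subgroup.zpowers (⟨g, hg⟩ : G)) := by
    refine Finite.of_surjective (fun k : S => (k : G ⧸ Subgroup.zpowers (⟨g, hg⟩ : G))) ?_
    rintro ⟨k⟩
    obtain ⟨n, hn⟩ := hcoset k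
    exact ⟨⟨_, hn⟩, QuotientGroup.mk_mul_of_mem k (Subgroup.zpow_mem_zpowers _ n)⟩
  exact Subgroup.finiteIndex_of_finite_quotient

theorem virtually_cyclic_of_cocompact_free_action_general
    (G : Subgroup (S3xR ≃ᵢ S3xR))
    (hdisc : ∀ K : Set S3xR, IsCompact K →
      {g : G | ∃ x ∈ K, (g : S3xR ≃ᵢ S3xR) x ∈ K}.Finite)
    (hcocompact : ∃ K : Set S3xR, IsCompact K ∧ ∀ x : S3xR, ∃ g ∈ G, g x ∈ K) :
    ∃ g : G, (∃ a : ℝ, a ≠ 0 ∧ ∀ x : S3xR, ((g : S3xR ≃ᵢ S3xR) x).2 = x.2 + a) ∧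
      (Subgroup.zpowers g).FiniteIndex := by
  have : Nonempty (sphere (0 : EuclideanSpace ℝ (Fin 4)) 1) :=
    (NormedSpace.sphere_nonempty.2 zero_le_one).to_subtype
  obtain ⟨g, hg, a, ha, hga⟩ := exists_mem_translation_of_cocompact G hcocompact
  exact ⟨⟨g, hg⟩, ⟨a, ha, hga⟩, finiteIndex_zpowers_of_translation G hdisc hg ha hga⟩

/-- A discrete group `G` acting by isometries on `S³ × ℝ` cocompactly and fixed point freely
contains an element `g` acting as a nontrivial translation on the `ℝ` factor, and the infinite
cyclic subgroup generated by `g` has finite index in `G`; in particular `G` is virtually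
infinite cyclic. -/
theorem virtually_cyclic_of_cocompact_free_action
    (G : Subgroup (S3xR ≃ᵢ S3xR))
    (hdisc : ∀ K : Set S3xR, IsCompact K →
      {g : G | ∃ x ∈ K, (g : S3xR ≃ᵢ S3xR) x ∈ K}.Finite)
    (hcocompact : ∃ K : Set S3xR, IsCompact K ∧ ∀ x : S3xR, ∃ g ∈ G, g x ∈ K)
    (hfree : ∀ g ∈ G, g ≠ 1 → ∀ x : S3xR, g x ≠ x) :
    ∃ g : G, (∃ a : ℝ, a ≠ 0 ∧ ∀ x : S3xR, ((g : S3xR ≃ᵢ S3xR) x).2 = x.2 + a) ∧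
      (Subgroup.zpowers g).FiniteIndex :=
  virtually_cyclic_of_cocompact_free_action_general G hdisc hcocompact
end

section
/- A free product of finitely many groups, each of which is finite or virtually (infinite) cyclic, contains a normal free subgroup of finite index. In particular, such a free product is virtually free and contains a torsion-free normal subgroup of finite index. -/
/-!
Each factor `G i` has a normal free subgroup `W i` of finite index: the trivial group, or the
normal core of an infinite cyclic subgroup of finite index. Let `N` be the kernel of the map
from `∗ G i` onto the finite group `∏ G i ⧸ W i`; then `N ∩ G i = W i`. The group `N` is the
vertex group of the action groupoid of `∗ G i` on `X = (∗ G i) ⧸ N`, so by Nielsen–Schreier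
it suffices that this groupoid is free. A functor from it to a group `Y` is a cocycle
`∗ G i → (X → Y)`, that is, one cocycle for each factor `G i` acting on `X`. All points of `X`
have the same stabilizer `W i` in `G i`, and a `G i`-cocycle is freely determined by its values
on a spanning tree of each `G i`-orbit together with a homomorphism `W i →* Y` at the base
point of the orbit; as `W i` is free, the latter is freely determined by its values on a basis.
-/

/-- A monoid is torsion-free if no nontrivial element has finite order
(the definition of `Monoid.IsTorsionFree` in the older Mathlib). -/
def Monoid.IsTorsionFree (G : Type*) [Monoid G] : Prop :=
  ∀ g : G, g ≠ 1 → ¬IsOfFinOrder g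

universe u

namespace MulAction

variable (H : Type*) {X : Type*} [Group H] [MulAction H X]

noncomputable def orbitRep (x : X) : X := (Quotient.mk (orbitRel H X) x).out

variable {H}

theorem orbitRep_mem_orbit (x : X) : orbitRep H x ∈ orbit H x :=
  Quotient.mk_out (s := orbitRel H X) x

theorem orbitRep_eq_of_mem_orbit {x y : X} (h : y ∈ orbit H x) : orbitRep H y = orbitRep H x :=
  congrArg Quotient.out (Quotient.sound h)

theorem orbitRep_smul (g : H) (x : X) : orbitRep H (g • x) = orbitRep H x :=
  orbitRep_eq_of_mem_orbit (mem_orbit x g)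

theorem orbitRep_orbitRep (x : X) : orbitRep H (orbitRep H x) = orbitRep H x :=
  orbitRep_eq_of_mem_orbit (orbitRep_mem_orbit x)

-- Normalized to `1` at the representative, so that the transversal only contributes tree
-- arrows between distinct points.
variable (H) in
open Classical in
noncomputable def orbitTransversal (x : X) : H :=
  if x = orbitRep H x then 1 else (mem_orbit_symm.mpr (orbitRep_mem_orbit (H := H) x)).choose

theorem orbitTransversal_smul_orbitRep (x : X) : orbitTransversal H x • orbitRep H x = x := by
  unfold orbitTransversal
  split_ifs with h
  · rw [one_smul, ← h]
  · exact (mem_orbit_symm.mpr (orbitRep_mem_orbit (H := H) x)).choose_spec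

theorem orbitTransversal_of_eq_orbitRep {x : X} (h : x = orbitRep H x) :
    orbitTransversal H x = 1 :=
  if_pos h

theorem inv_orbitTransversal_smul (x : X) : (orbitTransversal H x)⁻¹ • x = orbitRep H x := by
  rw [inv_smul_eq_iff, orbitTransversal_smul_orbitRep]

theorem orbitTransversal_smul_orbitRep_of_mem {x y : X} (h : y ∈ orbit H x) :
    orbitTransversal H y • orbitRep H x = y := by
  rw [← orbitRep_eq_of_mem_orbit h, orbitTransversal_smul_orbitRep]

section UniformStabilizer

variable {K : Subgroup H} (hK : ∀ (g : H) (x : X), g • x = x ↔ g ∈ K)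

noncomputable def stabilizerPart (g : H) (x : X) : K :=
  ⟨(orbitTransversal H x)⁻¹ * g * orbitTransversal H (g⁻¹ • x), by
    rw [← hK _ (orbitRep H x), mul_smul, mul_smul,
      orbitTransversal_smul_orbitRep_of_mem (mem_orbit x g⁻¹), smul_inv_smul,
      inv_orbitTransversal_smul]⟩

theorem stabilizerPart_mul (g h : H) (x : X) :
    stabilizerPart hK (g * h) x = stabilizerPart hK g x * stabilizerPart hK h (g⁻¹ • x) := by
  ext
  simp only [stabilizerPart, Subgroup.coe_mul, mul_inv_rev, mul_smul]
  group

theorem stabilizerPart_orbitTransversal (x : X) :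
    stabilizerPart hK (orbitTransversal H x) x = 1 := by
  ext
  simp only [stabilizerPart, inv_orbitTransversal_smul,
    orbitTransversal_of_eq_orbitRep (orbitRep_orbitRep x).symm, mul_one, inv_mul_cancel,
    OneMemClass.coe_one]

theorem stabilizerPart_of_mem {k : H} (hk : k ∈ K) {x : X} (hx : x = orbitRep H x) :
    stabilizerPart hK k x = ⟨k, hk⟩ := by
  have hkx : k⁻¹ • x = x := (hK _ x).mpr (K.inv_mem hk)
  ext
  simp only [stabilizerPart, hkx, orbitTransversal_of_eq_orbitRep hx, inv_one, one_mul, mul_one]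

end UniformStabilizer

variable {Y : Type*} [Group Y]

def IsCocycle (ψ : H → X → Y) : Prop :=
  ∀ g h x, ψ (g * h) x = ψ g x * ψ h (g⁻¹ • x)

namespace IsCocycle

variable {ψ : H → X → Y} (hψ : IsCocycle ψ)
include hψ

theorem map_one (x : X) : ψ 1 x = 1 := by
  simpa using hψ 1 1 x

theorem map_inv (g : H) (x : X) : ψ g⁻¹ x = (ψ g (g • x))⁻¹ := by
  have := hψ g g⁻¹ (g • x)
  rw [mul_inv_cancel, hψ.map_one, inv_smul_smul] at this
  exact eq_inv_of_mul_eq_one_right this.symm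

variable {K : Subgroup H} (hK : ∀ (g : H) (x : X), g • x = x ↔ g ∈ K)

def stabilizerHom (x : X) : K →* Y where
  toFun k := ψ k x
  map_one' := hψ.map_one x
  map_mul' k k' := by
    rw [Subgroup.coe_mul, hψ, (hK _ x).mpr (K.inv_mem k.2)]

theorem eq_stabilizerPart (g : H) (x : X) :
    ψ g x = ψ (orbitTransversal H x) x * ψ (stabilizerPart hK g x) (orbitRep H x) *
      (ψ (orbitTransversal H (g⁻¹ • x)) (g⁻¹ • x))⁻¹ := by
  have hg : g = orbitTransversal H x * stabilizerPart hK g x *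
      (orbitTransversal H (g⁻¹ • x))⁻¹ := by
    simp only [stabilizerPart]; group
  have hs : (stabilizerPart hK g x : H)⁻¹ • orbitRep H x = orbitRep H x :=
    (hK _ _).mpr (K.inv_mem (stabilizerPart hK g x).2)
  conv_lhs => rw [hg]
  rw [hψ, hψ, mul_inv_rev, mul_smul, inv_orbitTransversal_smul, hs, hψ.map_inv,
    orbitTransversal_smul_orbitRep_of_mem (mem_orbit x g⁻¹)]

theorem ext {ψ' : H → X → Y} (hψ' : IsCocycle ψ')
    (htree : ∀ x, ψ (orbitTransversal H x) x = ψ' (orbitTransversal H x) x)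
    (hstab : ∀ x, x = orbitRep H x → hψ.stabilizerHom hK x = hψ'.stabilizerHom hK x) :
    ψ = ψ' := by
  funext g x
  have hrep := DFunLike.congr_fun (hstab _ (orbitRep_orbitRep x).symm) (stabilizerPart hK g x)
  rw [hψ.eq_stabilizerPart hK, hψ'.eq_stabilizerPart hK, htree, htree]
  exact congrArg (_ * · * _) hrep

end IsCocycle

section OrbitData

variable {K : Subgroup H} (hK : ∀ (g : H) (x : X), g • x = x ↔ g ∈ K)
  (T : X → Y) (W : X → K →* Y)

noncomputable def cocycleOfOrbitData (g : H) (x : X) : Y :=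
  T x * W (orbitRep H x) (stabilizerPart hK g x) * (T (g⁻¹ • x))⁻¹

theorem isCocycle_cocycleOfOrbitData : IsCocycle (cocycleOfOrbitData hK T W) := by
  intro g h x
  simp only [cocycleOfOrbitData, stabilizerPart_mul, map_mul, orbitRep_smul, mul_inv_rev,
    mul_smul]
  group

variable {T} (hT : ∀ x, T (orbitRep H x) = 1)
include hT

theorem cocycleOfOrbitData_orbitTransversal (x : X) :
    cocycleOfOrbitData hK T W (orbitTransversal H x) x = T x := by
  simp only [cocycleOfOrbitData, stabilizerPart_orbitTransversal, inv_orbitTransversal_smul, hT,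
    map_one, mul_one, inv_one]

theorem cocycleOfOrbitData_of_mem {k : H} (hk : k ∈ K) {x : X} (hx : x = orbitRep H x) :
    cocycleOfOrbitData hK T W k x = W x ⟨k, hk⟩ := by
  have hkx : k⁻¹ • x = x := (hK _ x).mpr (K.inv_mem hk)
  have hTx : T x = 1 := hx ▸ hT x
  rw [cocycleOfOrbitData, stabilizerPart_of_mem hK hk hx, hkx, hTx, ← hx]
  group

end OrbitData

section Semidirect

variable {M : Type*} [Group M] [MulAction M X]

theorem isCocycle_left (φ : M →* (X → Y) ⋊[mulAutArrow] M) (hφ : ∀ m, (φ m).right = m) :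
    IsCocycle fun m => (φ m).left := by
  intro m n x
  show (φ (m * n)).left x = _
  rw [map_mul]
  show (φ m).left x * (φ n).left ((φ m).right⁻¹ • x) = _
  rw [hφ]

variable (ρ : H →* M) (hρ : ∀ (g : H) (x : X), ρ g • x = g • x)
include hρ

theorem IsCocycle.comp {ψ : M → X → Y} (hψ : IsCocycle ψ) :
    IsCocycle fun g => ψ (ρ g) := by
  intro g h x
  show ψ (ρ (g * h)) x = ψ (ρ g) x * ψ (ρ h) (g⁻¹ • x)
  rw [map_mul, hψ, ← hρ, _root_.map_inv]

def IsCocycle.toSemidirectProduct {ψ : H → X → Y} (hψ : IsCocycle ψ) :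
    H →* (X → Y) ⋊[mulAutArrow] M where
  toFun g := ⟨ψ g, ρ g⟩
  map_one' := SemidirectProduct.ext (funext hψ.map_one) ρ.map_one
  map_mul' g h := SemidirectProduct.ext (funext fun x => by
      show ψ (g * h) x = ψ g x * ψ h ((ρ g)⁻¹ • x)
      rw [hψ, ← _root_.map_inv, hρ])
    (ρ.map_mul g h)

end Semidirect

end MulAction

namespace CategoryTheory.ActionCategory

variable {M X Y : Type*} [Group M] [MulAction M X] [Group Y]

theorem map_eq_curry_left (E : ActionCategory M X ⥤ SingleObj Y) {a b : ActionCategory M X}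
    (p : a ⟶ b) : E.map p = (curry E p.val).left b.back := by
  cases p using ActionCategory.cases
  rfl

theorem curry_injective :
    Function.Injective (curry : (ActionCategory M X ⥤ SingleObj Y) → _) := by
  intro E E' h
  refine Functor.hext (fun _ => rfl) (ActionCategory.cases fun t g => heq_of_eq ?_)
  exact congrArg (fun φ => (φ g).left t) h

end CategoryTheory.ActionCategory

theorem QuotientGroup.smul_eq_self_iff_mem {M : Type*} [Group M] {N : Subgroup M} [N.Normal]
    (m : M) (x : M ⧸ N) : m • x = x ↔ m ∈ N := by
  induction x using QuotientGroup.induction_on with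
  | H γ =>
    rw [MulAction.Quotient.smul_coe, smul_eq_mul, QuotientGroup.mk_mul, mul_eq_right,
      QuotientGroup.eq_one_iff]

namespace Monoid.CoprodI

open CategoryTheory ActionCategory MulAction

variable {ι : Type u} {G : ι → Type u} [∀ i, Group (G i)] {X : Type u}
  [MulAction (CoprodI G) X]

abbrev factorMulAction (i : ι) : MulAction (G i) X := MulAction.compHom X of

attribute [local instance] factorMulAction

variable (K : ∀ i, Subgroup (G i)) [∀ i, IsFreeGroup (K i)]

inductive FactorGenerator (i : ι) :
    ActionCategory (CoprodI G) X → ActionCategory (CoprodI G) X → Type u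
  | tree (y : X) (hy : y ≠ orbitRep (G i) y) : FactorGenerator i (orbitRep (G i) y : X) y
  | loop (x : X) (hx : x = orbitRep (G i) x) (e : IsFreeGroup.Generators (K i)) :
      FactorGenerator i x x

variable {K} (hK : ∀ i (g : G i) (x : X), of g • x = x ↔ g ∈ K i)

noncomputable def FactorGenerator.toHom {i : ι} :
    ∀ {a b : ActionCategory (CoprodI G) X}, FactorGenerator K i a b → (a ⟶ b)
  | _, _, .tree y _ =>
    ⟨of (orbitTransversal (G i) y), orbitTransversal_smul_orbitRep (H := G i) y⟩
  | _, _, .loop x _ e => ⟨of (IsFreeGroup.of e : K i).1, (hK i _ x).mpr (IsFreeGroup.of e).2⟩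

variable {Y : Type u} [Group Y]

theorem isCocycle_curry_of (E : ActionCategory (CoprodI G) X ⥤ SingleObj Y) (i : ι) :
    IsCocycle fun g : G i => (curry E (of g)).left :=
  (isCocycle_left (curry E) fun _ => rfl).comp of fun _ _ => rfl

theorem actionCategory_functor_ext {E E' : ActionCategory (CoprodI G) X ⥤ SingleObj Y}
    (h : ∀ i a b (e : FactorGenerator K i a b), E.map (e.toHom hK) = E'.map (e.toHom hK)) :
    E = E' := by
  refine curry_injective (ext_hom _ _ fun i => MonoidHom.ext fun g => ?_)
  have hψ := isCocycle_curry_of E i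
  have hψ' := isCocycle_curry_of E' i
  have key (a b : ActionCategory (CoprodI G) X) (e : FactorGenerator K i a b) :
      (curry E (e.toHom hK).val).left b.back = (curry E' (e.toHom hK).val).left b.back := by
    rw [← map_eq_curry_left, ← map_eq_curry_left, h]
  have htree (y : X) : (curry E (of (orbitTransversal (G i) y))).left y =
      (curry E' (of (orbitTransversal (G i) y))).left y := by
    by_cases hy : y = orbitRep (G i) y
    · rw [orbitTransversal_of_eq_orbitRep hy, hψ.map_one, hψ'.map_one]
    · exact key _ _ (.tree y hy)
  have hstab (x : X) (hx : x = orbitRep (G i) x) :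
      hψ.stabilizerHom (hK i) x = hψ'.stabilizerHom (hK i) x :=
    IsFreeGroup.ext_hom fun e => key _ _ (.loop x hx e)
  exact SemidirectProduct.ext (congrFun (hψ.ext (hK i) hψ' htree hstab) g) rfl

section Lift

variable (f : ∀ i ⦃a b : ActionCategory (CoprodI G) X⦄, FactorGenerator K i a b → Y)

open Classical in
noncomputable def treeLabel (i : ι) (y : X) : Y :=
  if hy : y = orbitRep (G i) y then 1 else f i (.tree y hy)

open Classical in
noncomputable def loopLabel (i : ι) (x : X) : K i →* Y :=
  IsFreeGroup.lift fun e => if hx : x = orbitRep (G i) x then f i (.loop x hx e) else 1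

theorem treeLabel_orbitRep (i : ι) (x : X) : treeLabel f i (orbitRep (G i) x) = 1 :=
  dif_pos (orbitRep_orbitRep x).symm

noncomputable def homOfLabels : CoprodI G →* (X → Y) ⋊[mulAutArrow] CoprodI G :=
  CoprodI.lift fun i =>
    (isCocycle_cocycleOfOrbitData (hK i) (treeLabel f i) (loopLabel f i)).toSemidirectProduct
      of fun _ _ => rfl

theorem homOfLabels_of {i : ι} (g : G i) :
    homOfLabels hK f (of g) =
      ⟨cocycleOfOrbitData (hK i) (treeLabel f i) (loopLabel f i) g, of g⟩ :=
  lift_of _ _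

theorem homOfLabels_of_left {i : ι} (g : G i) :
    (homOfLabels hK f (of g)).left =
      cocycleOfOrbitData (hK i) (treeLabel f i) (loopLabel f i) g := by
  rw [homOfLabels_of]

theorem homOfLabels_right (m : CoprodI G) : (homOfLabels hK f m).right = m := by
  suffices SemidirectProduct.rightHom.comp (homOfLabels hK f) = MonoidHom.id _ from
    DFunLike.congr_fun this m
  exact ext_hom _ _ fun i => MonoidHom.ext fun g => by simp [homOfLabels_of]

noncomputable def functorOfLabels : ActionCategory (CoprodI G) X ⥤ SingleObj Y :=
  uncurry (homOfLabels hK f) (homOfLabels_right hK f)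

theorem functorOfLabels_map_toHom {i : ι} {a b : ActionCategory (CoprodI G) X}
    (e : FactorGenerator K i a b) :
    (functorOfLabels hK f).map (e.toHom hK) = f i e := by
  cases e with
  | tree y hy =>
    change (homOfLabels hK f (of _)).left y = _
    rw [homOfLabels_of_left, cocycleOfOrbitData_orbitTransversal _ _ (treeLabel_orbitRep f i)]
    exact dif_neg hy
  | loop x hx e =>
    change (homOfLabels hK f (of _)).left x = _
    rw [homOfLabels_of_left, cocycleOfOrbitData_of_mem _ _ (treeLabel_orbitRep f i) _ hx]
    change loopLabel f i x (IsFreeGroup.of e) = _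
    rw [loopLabel, IsFreeGroup.lift_of, dif_pos hx]

end Lift

noncomputable abbrev isFreeGroupoid_actionCategory :
    IsFreeGroupoid (ActionCategory (CoprodI G) X) where
  quiverGenerators := ⟨fun a b => Σ i, FactorGenerator K i a b⟩
  of := fun ⟨_, e⟩ => e.toHom hK
  unique_lift f :=
    ⟨functorOfLabels hK fun i _ _ e => f ⟨i, e⟩,
      fun _ _ ⟨_, e⟩ => functorOfLabels_map_toHom hK _ e,
      fun _ hE => actionCategory_functor_ext hK fun i a b e => (hE a b ⟨i, e⟩).trans
        (functorOfLabels_map_toHom hK (fun i _ _ e => f ⟨i, e⟩) e).symm⟩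

theorem isFreeGroup_of_normal (N : Subgroup (CoprodI G)) [N.Normal]
    [∀ i, IsFreeGroup (N.comap (of : G i →* CoprodI G))] :
    IsFreeGroup N := by
  let := isFreeGroupoid_actionCategory (X := CoprodI G ⧸ N) (K := fun i => N.comap of)
    fun _ g x => QuotientGroup.smul_eq_self_iff_mem (of g) x
  let r := ActionCategory.objEquiv (CoprodI G) (CoprodI G ⧸ N) ↑(1 : CoprodI G)
  -- `endIsFreeOfConnectedFree` sees the action category through its groupoid structure, the
  -- `IsConnected` instance and `endMulEquivSubgroup` through the category of elements; the two
  -- agree only after unfolding.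
  have : @IsConnected (ActionCategory (CoprodI G) (CoprodI G ⧸ N)) Groupoid.toCategory :=
    (inferInstance : IsConnected (ActionCategory (CoprodI G) (CoprodI G ⧸ N)))
  have := IsFreeGroupoid.endIsFreeOfConnectedFree r
  let e := ActionCategory.endMulEquivSubgroup N
  exact IsFreeGroup.ofMulEquiv (G := @End _ Groupoid.toCategory.toCategoryStruct r)
    { toEquiv := e.toEquiv, map_mul' := fun x y => by exact e.map_mul x y }

end Monoid.CoprodI

theorem IsFreeGroup.of_isCyclic_of_infinite {H : Type*} [Group H] [IsCyclic H] [Infinite H] :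
    IsFreeGroup H :=
  IsFreeGroup.ofMulEquiv ((FreeGroup.mulEquivIntOfUnique (α := Unit)).trans intCyclicMulEquiv)

theorem IsFreeGroup.bot {H : Type u} [Group H] : IsFreeGroup (⊥ : Subgroup H) :=
  IsFreeGroup.ofMulEquiv (MulEquiv.ofUnique (M := FreeGroup PEmpty.{u + 1}))

theorem IsFreeGroup.isTorsionFree {H : Type*} [Group H] [IsFreeGroup H] :
    Monoid.IsTorsionFree H :=
  have := (IsFreeGroup.toFreeGroup H).injective.isMulTorsionFree
    (IsFreeGroup.toFreeGroup H).toMonoidHom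
  fun _ hg => not_isOfFinOrder_of_isMulTorsionFree hg

theorem Subgroup.exists_normal_finiteIndex_isFreeGroup {H : Type*} [Group H]
    (h : Finite H ∨ ∃ g : H, ¬IsOfFinOrder g ∧ (Subgroup.zpowers g).FiniteIndex) :
    ∃ W : Subgroup H, W.Normal ∧ W.FiniteIndex ∧ IsFreeGroup W := by
  rcases h with _ | ⟨g, hg, _⟩
  · exact ⟨⊥, inferInstance, inferInstance, IsFreeGroup.bot⟩
  · have : Infinite H := Infinite.of_injective _ (injective_zpow_iff_not_isOfFinOrder.mpr hg)
    have : IsCyclic (zpowers g).normalCore := isCyclic_of_le (zpowers g).normalCore_le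
    have : Infinite (zpowers g).normalCore := by
      refine not_finite_iff_infinite.mp fun _ => ?_
      have := (finite_iff_finite_and_finiteIndex (H := (zpowers g).normalCore)).mpr
        ⟨inferInstance, inferInstance⟩
      exact not_finite H
    exact ⟨(zpowers g).normalCore, inferInstance, inferInstance,
      IsFreeGroup.of_isCyclic_of_infinite⟩

namespace Monoid.CoprodI

variable {ι : Type*} [DecidableEq ι] {G : ι → Type*} [∀ i, Group (G i)]

def toPiQuotient (W : ∀ i, Subgroup (G i)) [∀ i, (W i).Normal] :
    CoprodI G →* ∀ i, G i ⧸ W i :=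
  lift fun i => (MonoidHom.mulSingle _ i).comp (QuotientGroup.mk' (W i))

theorem comap_of_ker_toPiQuotient (W : ∀ i, Subgroup (G i)) [∀ i, (W i).Normal] (i : ι) :
    (toPiQuotient W).ker.comap of = W i := by
  ext x
  simp [toPiQuotient, MonoidHom.mem_ker]

end Monoid.CoprodI

/-- A free product of finitely many groups, each finite or virtually infinite cyclic, contains
a normal free subgroup of finite index; in particular it is virtually free and contains a
torsion-free normal subgroup of finite index. -/
theorem free_product_virtually_free
    (ι : Type) [Fintype ι] (G : ι → Type) [∀ i, Group (G i)]
    (h : ∀ i, Finite (G i) ∨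
      ∃ g : G i, ¬ IsOfFinOrder g ∧ (Subgroup.zpowers g).FiniteIndex) :
    ∃ N : Subgroup (Monoid.CoprodI G), N.Normal ∧ N.FiniteIndex ∧
      IsFreeGroup N ∧ Monoid.IsTorsionFree N := by
  classical
  choose W _ _ hWfree using fun i => Subgroup.exists_normal_finiteIndex_isFreeGroup (h i)
  let π := Monoid.CoprodI.toPiQuotient W
  have (i : ι) : IsFreeGroup (π.ker.comap Monoid.CoprodI.of) :=
    Monoid.CoprodI.comap_of_ker_toPiQuotient W i ▸ hWfree i
  have := Monoid.CoprodI.isFreeGroup_of_normal π.ker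
  exact ⟨π.ker, inferInstance, inferInstance, this, IsFreeGroup.isTorsionFree⟩
end

section
/- Let Γ be a finite group acting by isometries on S³ × ℝ such that all fixed points of nontrivial elements are isolated and all of them lie in S³ × {0}. Suppose γ ∈ Γ has a fixed point z = (o, 0). Then the stabilizer Γ_z of z has order at most 2, and any nontrivial element of Γ_z acts on the ℝ factor by s ↦ -s. -/
/-!
An isometry of `S³ × ℝ` (with the max product metric) acts on heights by `s ↦ ±s + a`: points
far apart in the `ℝ` direction are at distance their height difference. Suppose a nontrivial `g`
fixing `z = (o, 0)` preserved heights. Each level slice of `g` is the restriction of an orthogonal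
map of `ℝ⁴`, depending continuously on the height, so all slices have the same determinant. If it
is `-1`, every slice fixes a unit vector (the dimension is even), giving fixed points off
`S³ × {0}`; if it is `1`, the slice at height `0` fixes `o` and a vector orthogonal to `o`, hence
a great circle through `o`, and `z` is not an isolated fixed point. So every nontrivial element of
the stabilizer reverses heights, the product of two of them preserves heights and is trivial, and
the stabilizer has at most two elements.
-/

open Real Matrix
open scoped RealInnerProductSpace

section SndOfIsometry

variable {X : Type*} [PseudoMetricSpace X] {D : ℝ} {g : X × ℝ → X × ℝ}

lemma Isometry.abs_snd_sub_eq (hg : Isometry g) (hD : ∀ x y : X, dist x y ≤ D)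
    {p q : X × ℝ} (hpq : D < |p.2 - q.2|) : |(g p).2 - (g q).2| = |p.2 - q.2| := by
  have hdist := hg.dist_eq p q
  rw [Prod.dist_eq, Prod.dist_eq, Real.dist_eq, Real.dist_eq,
    max_eq_right ((hD _ _).trans hpq.le)] at hdist
  rcases max_eq_iff.mp hdist with ⟨h1, -⟩ | ⟨h2, -⟩
  · linarith [hD (g p).1 (g q).1]
  · exact h2

/-- The height of `g p` is pinned down by its distances to the images of three points high above
`p`, `(x₀, 0)` and `(x₀, 1)`. -/
theorem Isometry.exists_snd_eq [Nonempty X] (hg : Isometry g) (hD : ∀ x y : X, dist x y ≤ D) :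
    ∃ ε a : ℝ, (ε = 1 ∨ ε = -1) ∧ ∀ p, (g p).2 = ε * p.2 + a := by
  obtain ⟨x₀⟩ := ‹Nonempty X›
  set a := (g (x₀, 0)).2
  set b := (g (x₀, 1)).2
  suffices key : ∀ p : X × ℝ, (b - a = 1 ∨ b - a = -1) ∧ (g p).2 = (b - a) * p.2 + a from
    ⟨b - a, a, (key (x₀, 0)).1, fun p => (key p).2⟩
  intro p
  set t := |D| + |p.2| + |(g p).2| + |a| + |b| + 2
  have far (x : X) (s : ℝ) (hs : |s| ≤ |p.2| + 1) : |(g (x₀, t)).2 - (g (x, s)).2| = t - s := by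
    have hbig : |D| < t - s := by
      linarith [le_abs_self s, abs_nonneg (g p).2, abs_nonneg a, abs_nonneg b]
    have habs : |(x₀, t).2 - (x, s).2| = t - s := abs_of_pos ((abs_nonneg D).trans_lt hbig)
    rw [hg.abs_snd_sub_eq hD (by rw [habs]; exact (le_abs_self D).trans_lt hbig), habs]
  have hp := far p.1 p.2 (le_add_of_nonneg_right zero_le_one)
  have h0 := far x₀ 0 (abs_zero.trans_le (by positivity))
  have h1 := far x₀ 1 (by rw [abs_one, add_comm]; exact le_add_of_nonneg_right (abs_nonneg _))
  rw [sub_zero] at h0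
  have := le_abs_self p.2; have := neg_abs_le p.2
  have := le_abs_self (g p).2; have := neg_abs_le (g p).2
  have := le_abs_self a; have := neg_abs_le a; have := le_abs_self b; have := neg_abs_le b
  have := abs_nonneg D
  rcases (abs_eq (by linarith)).mp hp with hp | hp <;>
    rcases (abs_eq (by linarith)).mp h0 with h0 | h0 <;>
    rcases (abs_eq (by linarith)).mp h1 with h1 | h1
  all_goals first
    | exfalso; linarith
    | have hε : b - a = 1 := by linarith
      exact ⟨Or.inl hε, by rw [hε]; linarith⟩
    | have hε : b - a = -1 := by linarith
      exact ⟨Or.inr hε, by rw [hε]; linarith⟩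

end SndOfIsometry

namespace Matrix

variable {ι : Type*} [Fintype ι] [DecidableEq ι] {A : Matrix ι ι ℝ}

lemma det_sub_one_eq_zero_of_det_eq_neg_one (hι : Even (Fintype.card ι)) (hA : Aᵀ * A = 1)
    (hdet : A.det = -1) : (A - 1).det = 0 := by
  have hA' : A * Aᵀ = 1 := mul_eq_one_comm.mp hA
  have hneg : (1 - A).det = (A - 1).det := by
    rw [← neg_sub, det_neg, hι.neg_one_pow, one_mul]
  have key : A.det * (A - 1).det = (1 - A).det := by
    rw [← det_transpose (A - 1), ← det_mul, transpose_sub, transpose_one, Matrix.mul_sub, hA',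
      Matrix.mul_one]
  rw [hneg, hdet] at key
  linarith

lemma exists_mulVec_eq_self_of_det_eq_neg_one (hι : Even (Fintype.card ι)) (hA : Aᵀ * A = 1)
    (hdet : A.det = -1) : ∃ v, v ≠ 0 ∧ A *ᵥ v = v := by
  obtain ⟨v, hv, hAv⟩ := exists_mulVec_eq_zero_iff.mpr
    (det_sub_one_eq_zero_of_det_eq_neg_one hι hA hdet)
  exact ⟨v, hv, by rwa [sub_mulVec, one_mulVec, sub_eq_zero] at hAv⟩

lemma mulVec_dotProduct_mulVec (hA : Aᵀ * A = 1) (v w : ι → ℝ) :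
    A *ᵥ v ⬝ᵥ A *ᵥ w = v ⬝ᵥ w := by
  rw [dotProduct_mulVec, ← vecMul_transpose, vecMul_vecMul, hA, vecMul_one]

section Reflection

variable {o : ι → ℝ}

lemma transpose_mul_self_one_sub_two_smul_vecMulVec (ho : o ⬝ᵥ o = 1) :
    (1 - (2 : ℝ) • vecMulVec o o)ᵀ * (1 - (2 : ℝ) • vecMulVec o o) = 1 := by
  have hsq : vecMulVec o o * vecMulVec o o = vecMulVec o o := by
    rw [vecMulVec_mul_vecMulVec, ho, one_smul]
  rw [transpose_sub, transpose_one, transpose_smul, transpose_vecMulVec]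
  simp only [Matrix.sub_mul, Matrix.mul_sub, Matrix.smul_mul, Matrix.mul_smul, Matrix.one_mul,
    Matrix.mul_one, hsq]
  module

lemma det_one_sub_two_smul_vecMulVec (ho : o ⬝ᵥ o = 1) :
    (1 - (2 : ℝ) • vecMulVec o o).det = -1 := by
  rw [sub_eq_add_neg, ← neg_smul, ← smul_vecMulVec, vecMulVec_eq Unit,
    det_one_add_replicateCol_mul_replicateRow, dotProduct_smul, ho]
  norm_num

end Reflection

/-- Composing with the reflection in `o⊥` turns `A` into an orthogonal matrix of determinant
`-1`, whose fixed vector is then shown to be orthogonal to `o` and fixed by `A` itself. -/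
lemma exists_mulVec_eq_self_of_det_eq_one (hι : Even (Fintype.card ι)) (hA : Aᵀ * A = 1)
    (hdet : A.det = 1) {o : ι → ℝ} (ho : o ⬝ᵥ o = 1) (hAo : A *ᵥ o = o) :
    ∃ w, w ≠ 0 ∧ o ⬝ᵥ w = 0 ∧ A *ᵥ w = w := by
  set R := 1 - (2 : ℝ) • vecMulVec o o
  have hAR : (A * R)ᵀ * (A * R) = 1 := by
    rw [transpose_mul, Matrix.mul_assoc, ← Matrix.mul_assoc Aᵀ, hA, Matrix.one_mul,
      transpose_mul_self_one_sub_two_smul_vecMulVec ho]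
  obtain ⟨w, hw, hARw⟩ := exists_mulVec_eq_self_of_det_eq_neg_one hι hAR
    (by rw [det_mul, hdet, det_one_sub_two_smul_vecMulVec ho, one_mul])
  have hRw : R *ᵥ w = w - (2 * (o ⬝ᵥ w)) • o := by
    rw [sub_mulVec, one_mulVec, smul_mulVec, vecMulVec_mulVec, op_smul_eq_smul, smul_smul]
  rw [← mulVec_mulVec, hRw, mulVec_sub, mulVec_smul, hAo] at hARw
  have hperp : o ⬝ᵥ w = 0 := by
    have := congrArg (o ⬝ᵥ ·) hARw
    simp only [dotProduct_sub, dotProduct_smul, smul_eq_mul, ho] at this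
    rw [← hAo, mulVec_dotProduct_mulVec hA, hAo] at this
    linarith
  refine ⟨w, hw, hperp, ?_⟩
  simpa [hperp] using hARw

end Matrix

section InnerProductSpace

variable {E : Type*} [NormedAddCommGroup E] [InnerProductSpace ℝ E]

lemma Isometry.inner_map_sphere {f : Metric.sphere (0 : E) 1 → Metric.sphere (0 : E) 1}
    (hf : Isometry f) (x y : Metric.sphere (0 : E) 1) :
    ⟪(f x : E), f y⟫ = ⟪(x : E), y⟫ := by
  have hdist := congrArg (· ^ 2) (hf.dist_eq x y)
  simp only [Subtype.dist_eq, dist_eq_norm, norm_sub_sq_real, norm_eq_of_mem_sphere] at hdist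
  linarith

/-- The points `cos t • o + sin t • ‖w‖⁻¹ • w` of the great circle through `o` and `w`
approach `o` as `t → 0`. -/
lemma LinearMap.exists_fixed_unit_vector_near {T : E →ₗ[ℝ] E} {o w : E} (ho : ‖o‖ = 1)
    (hw : w ≠ 0) (how : ⟪o, w⟫ = 0) (hTo : T o = o) (hTw : T w = w) {ε : ℝ} (hε : 0 < ε) :
    ∃ u, T u = u ∧ ‖u‖ = 1 ∧ u ≠ o ∧ dist u o < ε := by
  set w₁ := ‖w‖⁻¹ • w
  have hw₁ : ‖w₁‖ = 1 := norm_smul_inv_norm hw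
  have how₁ : ⟪o, w₁⟫ = 0 := by rw [real_inner_smul_right, how, mul_zero]
  set t := min (ε / 2) 1
  have ht : 0 < t := lt_min (half_pos hε) one_pos
  have hsin : 0 < sin t := sin_pos_of_pos_of_lt_pi ht ((min_le_right _ _).trans_lt
    (by linarith [pi_gt_three]))
  have hnorm (a b : ℝ) : ‖a • o + b • w₁‖ ^ 2 = a ^ 2 + b ^ 2 := by
    rw [sq, norm_add_sq_eq_norm_sq_add_norm_sq_real
        (by rw [real_inner_smul_left, real_inner_smul_right, how₁]; ring),
      norm_smul, norm_smul, ho, hw₁, Real.norm_eq_abs, Real.norm_eq_abs]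
    nlinarith [sq_abs a, sq_abs b]
  refine ⟨cos t • o + sin t • w₁, ?_, ?_, ?_, ?_⟩
  · rw [map_add, map_smul, map_smul, map_smul, hTo, hTw]
  · have := hnorm (cos t) (sin t)
    rw [cos_sq_add_sin_sq] at this
    nlinarith [norm_nonneg (cos t • o + sin t • w₁)]
  · intro h
    have := congrArg (⟪w₁, ·⟫) h
    simp only [inner_add_right, real_inner_smul_right, real_inner_comm o, how₁,
      real_inner_self_eq_norm_sq, hw₁] at this
    linarith
  · have hsq : dist (cos t • o + sin t • w₁) o ^ 2 ≤ t ^ 2 := by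
      have : cos t • o + sin t • w₁ - o = (cos t - 1) • o + sin t • w₁ := by module
      rw [dist_eq_norm, this, hnorm]
      nlinarith [sin_sq_add_cos_sq t, one_sub_sq_div_two_le_cos (x := t)]
    calc dist (cos t • o + sin t • w₁) o ≤ t := abs_le_of_sq_le_sq' hsq ht.le |>.2
      _ < ε := (min_le_left _ _).trans_lt (half_lt_self hε)

end InnerProductSpace

lemma Continuous.eq_of_mul_self_eq_one {X : Type*} [TopologicalSpace X] [PreconnectedSpace X]
    {f : X → ℝ} (hf : Continuous f) (h : ∀ x, f x * f x = 1) (a b : X) : f a = f b := by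
  have no_sign_change (a b : X) (ha : f a = -1) (hb : f b = 1) : False := by
    obtain ⟨c, hc⟩ := intermediate_value_univ a b hf (show (0 : ℝ) ∈ Set.Icc (f a) (f b) by
      rw [ha, hb]; norm_num)
    simpa [hc] using h c
  rcases mul_self_eq_one_iff.mp (h a) with ha | ha <;>
    rcases mul_self_eq_one_iff.mp (h b) with hb | hb
  all_goals first
    | exact ha.trans hb.symm
    | exact (no_sign_change a b ha hb).elim
    | exact (no_sign_change b a hb ha).elim

section UnitSphere

variable {ι : Type*} [Fintype ι]

local notation "𝕊" ι:max => Metric.sphere (0 : EuclideanSpace ℝ ι) (1 : ℝ)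

open EuclideanSpace WithLp

noncomputable def sliceMap (g : 𝕊 ι × ℝ ≃ᵢ 𝕊 ι × ℝ) (s : ℝ) (x : 𝕊 ι) : 𝕊 ι := (g (x, s)).1

variable {g : 𝕊 ι × ℝ ≃ᵢ 𝕊 ι × ℝ}

lemma apply_eq_sliceMap (hg : ∀ p, (g p).2 = p.2) (s : ℝ) (x : 𝕊 ι) :
    g (x, s) = (sliceMap g s x, s) :=
  Prod.ext rfl (hg _)

lemma isometry_sliceMap (hg : ∀ p, (g p).2 = p.2) (s : ℝ) : Isometry (sliceMap g s) := by
  refine Isometry.of_dist_eq fun x y => ?_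
  have := g.dist_eq (x, s) (y, s)
  rwa [apply_eq_sliceMap hg, apply_eq_sliceMap hg, Prod.dist_eq, Prod.dist_eq, dist_self,
    max_eq_left dist_nonneg, max_eq_left dist_nonneg] at this

lemma surjective_sliceMap (hg : ∀ p, (g p).2 = p.2) (s : ℝ) :
    Function.Surjective (sliceMap g s) := by
  intro y
  refine ⟨(g.symm (y, s)).1, ?_⟩
  have hs : ((g.symm (y, s)).1, s) = g.symm (y, s) := by
    refine Prod.ext rfl ?_
    simpa using hg (g.symm (y, s))
  rw [sliceMap, hs, g.apply_symm_apply]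

lemma EuclideanSpace.ofLp_dotProduct_ofLp (x y : EuclideanSpace ℝ ι) :
    ofLp x ⬝ᵥ ofLp y = ⟪x, y⟫ := by
  simp [EuclideanSpace.inner_eq_star_dotProduct, dotProduct_comm]

variable [DecidableEq ι]

noncomputable def EuclideanSpace.singleSphere (i : ι) : 𝕊 ι := ⟨EuclideanSpace.single i 1, by simp⟩

lemma EuclideanSpace.inner_singleSphere (v : EuclideanSpace ℝ ι) (i : ι) :
    ⟪v, (singleSphere i : EuclideanSpace ℝ ι)⟫ = v i := by
  simp [singleSphere, EuclideanSpace.inner_single_right]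

noncomputable def sphereMatrix (f : 𝕊 ι → 𝕊 ι) : Matrix ι ι ℝ :=
  Matrix.of fun i j => (f (singleSphere j) : EuclideanSpace ℝ ι) i

variable {f : 𝕊 ι → 𝕊 ι}

lemma sphereMatrix_transpose_mul_self (hf : Isometry f) :
    (sphereMatrix f)ᵀ * sphereMatrix f = 1 := by
  ext j k
  calc ((sphereMatrix f)ᵀ * sphereMatrix f) j k
      = ⟪(f (singleSphere j) : EuclideanSpace ℝ ι), f (singleSphere k)⟫ := by
        simp [sphereMatrix, mul_apply, PiLp.inner_apply, mul_comm]
    _ = (1 : Matrix ι ι ℝ) j k := by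
        rw [hf.inner_map_sphere, inner_singleSphere]
        simp [singleSphere, one_apply, eq_comm]

lemma toEuclideanLin_sphereMatrix (hf : Isometry f) (hsurj : Function.Surjective f)
    (x : 𝕊 ι) : toEuclideanLin (sphereMatrix f) x = f x := by
  ext i
  obtain ⟨y, hy⟩ := hsurj (singleSphere i)
  have hcol (j : ι) : (f (singleSphere j) : EuclideanSpace ℝ ι) i = (y : EuclideanSpace ℝ ι) j := by
    rw [← inner_singleSphere, ← hy, hf.inner_map_sphere, real_inner_comm, inner_singleSphere]
  calc (toEuclideanLin (sphereMatrix f) x) i = ⟪(x : EuclideanSpace ℝ ι), y⟫ := by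
        simp [toLpLin_apply, sphereMatrix, mulVec, dotProduct, hcol, PiLp.inner_apply,
          mul_comm]
    _ = (f x : EuclideanSpace ℝ ι) i := by
        rw [← hf.inner_map_sphere, hy, inner_singleSphere]

lemma continuous_sphereMatrix_sliceMap (g : 𝕊 ι × ℝ ≃ᵢ 𝕊 ι × ℝ) :
    Continuous fun s => sphereMatrix (sliceMap g s) :=
  continuous_matrix fun i j => by
    unfold sphereMatrix sliceMap
    fun_prop

lemma apply_eq_self_of_toEuclideanLin (hg : ∀ p, (g p).2 = p.2) {s : ℝ}
    {x : 𝕊 ι} (hx : toEuclideanLin (sphereMatrix (sliceMap g s)) x = x) : g (x, s) = (x, s) := by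
  have hfix : sliceMap g s x = x := Subtype.ext <| .trans
    (toEuclideanLin_sphereMatrix (isometry_sliceMap hg s) (surjective_sliceMap hg s) x).symm hx
  rw [apply_eq_sliceMap hg, hfix]

lemma exists_apply_eq_self_of_det_eq_neg_one (hι : Even (Fintype.card ι))
    (hg : ∀ p, (g p).2 = p.2) {s : ℝ} (hdet : (sphereMatrix (sliceMap g s)).det = -1) :
    ∃ x : 𝕊 ι, g (x, s) = (x, s) := by
  obtain ⟨v, hv, hAv⟩ := exists_mulVec_eq_self_of_det_eq_neg_one hι
    (sphereMatrix_transpose_mul_self (isometry_sliceMap hg s)) hdet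
  have hx : ‖‖toLp 2 v‖⁻¹ • toLp 2 v‖ = 1 := norm_smul_inv_norm (by simpa using hv)
  refine ⟨⟨_, by simpa using hx⟩, apply_eq_self_of_toEuclideanLin hg ?_⟩
  rw [map_smul, toLpLin_apply, ofLp_toLp, hAv]

lemma forall_exists_apply_eq_self_near_of_det_eq_one (hι : Even (Fintype.card ι))
    (hg : ∀ p, (g p).2 = p.2) {z : 𝕊 ι × ℝ} (hz : g z = z)
    (hdet : (sphereMatrix (sliceMap g z.2)).det = 1) {ε : ℝ} (hε : 0 < ε) :
    ∃ y, g y = y ∧ y ≠ z ∧ dist y z < ε := by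
  obtain ⟨o, s⟩ := z
  set A := sphereMatrix (sliceMap g s)
  have hAo : A *ᵥ ofLp (o : EuclideanSpace ℝ ι) = ofLp (o : EuclideanSpace ℝ ι) := by
    have hso : sliceMap g s o = o := congrArg Prod.fst ((apply_eq_sliceMap hg s o).symm.trans hz)
    have := congrArg ofLp <| toEuclideanLin_sphereMatrix (isometry_sliceMap hg s)
      (surjective_sliceMap hg s) o
    rwa [hso, toLpLin_apply, ofLp_toLp] at this
  obtain ⟨w, hw, how, hAw⟩ := exists_mulVec_eq_self_of_det_eq_one hι
    (sphereMatrix_transpose_mul_self (isometry_sliceMap hg s)) hdet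
    (by rw [ofLp_dotProduct_ofLp, real_inner_self_eq_norm_sq, norm_eq_of_mem_sphere, one_pow]) hAo
  obtain ⟨u, hu, hu₁, huo, hdist⟩ := (toEuclideanLin A).exists_fixed_unit_vector_near
    (norm_eq_of_mem_sphere o) (w := toLp 2 w) (by simpa using hw)
    (by rw [← ofLp_dotProduct_ofLp]; exact how) (by rw [toLpLin_apply]; congr)
    (by rw [toLpLin_apply]; congr) hε
  refine ⟨(⟨u, by simpa using hu₁⟩, s), apply_eq_self_of_toEuclideanLin hg hu, ?_, ?_⟩
  · simpa [Subtype.ext_iff] using huo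
  · simpa [Prod.dist_eq, Subtype.dist_eq] using hdist

theorem exists_fixed_ne_snd_or_forall_exists_fixed_near (hι : Even (Fintype.card ι))
    (hg : ∀ p, (g p).2 = p.2) {z : 𝕊 ι × ℝ} (hz : g z = z) :
    (∃ x, g x = x ∧ x.2 ≠ z.2) ∨ ∀ ε > 0, ∃ y, g y = y ∧ y ≠ z ∧ dist y z < ε := by
  set d := fun s => (sphereMatrix (sliceMap g s)).det
  have hd (s : ℝ) : d s * d s = 1 := by
    simpa using congrArg det (sphereMatrix_transpose_mul_self (isometry_sliceMap hg s))
  rcases mul_self_eq_one_iff.mp (hd z.2) with hdz | hdz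
  · exact .inr fun ε hε => forall_exists_apply_eq_self_near_of_det_eq_one hι hg hz hdz hε
  · have hconst := (continuous_sphereMatrix_sliceMap g).matrix_det.eq_of_mul_self_eq_one hd
    obtain ⟨x, hx⟩ := exists_apply_eq_self_of_det_eq_neg_one hι hg ((hconst _ z.2).trans hdz)
    exact .inl ⟨(x, z.2 + 1), hx, by simp⟩

end UnitSphere

lemma Metric.sphere.dist_le_two_mul {α : Type*} [PseudoMetricSpace α] {c : α} {r : ℝ}
    (x y : sphere c r) : dist x y ≤ 2 * r := by
  linarith [Subtype.dist_eq x y, dist_triangle_right (x : α) y c, mem_sphere.mp x.2,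
    mem_sphere.mp y.2]

lemma Nat.card_subtype_le_two_of_mul_eq_one {G : Type*} [Group G] {p : G → Prop}
    (h : ∀ a b, p a → p b → a ≠ 1 → b ≠ 1 → a * b = 1) : Nat.card {a // p a} ≤ 2 := by
  classical
  have huniq (a b : G) (ha : p a) (hb : p b) (ha₁ : a ≠ 1) (hb₁ : b ≠ 1) : a = b :=
    (eq_inv_of_mul_eq_one_left (h a b ha hb ha₁ hb₁)).trans
      (inv_eq_of_mul_eq_one_left (h b b hb hb hb₁ hb₁))
  have hinj : Function.Injective fun a : {a // p a} => decide (a.1 = 1) := by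
    intro a b hab
    by_cases ha : a.1 = 1 <;> by_cases hb : b.1 = 1 <;>
      simp only [ha, hb, decide_true, decide_false, Bool.true_eq_false, Bool.false_eq_true] at hab
    · exact Subtype.ext (ha.trans hb.symm)
    · exact Subtype.ext (huniq _ _ a.2 b.2 ha hb)
  simpa using Nat.card_le_card_of_injective _ hinj

theorem stabilizer_order_le_two_general
    (Γ : Subgroup (S3xR ≃ᵢ S3xR))
    (hiso : ∀ g ∈ Γ, g ≠ 1 → ∀ x : S3xR, g x = x →
      x.2 = 0 ∧ ∃ ε > 0, ∀ y : S3xR, g y = y → y ≠ x → ε ≤ dist x y)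
    (z : S3xR) :
    Nat.card {g : Γ // (g : S3xR ≃ᵢ S3xR) z = z} ≤ 2 ∧
      ∀ g : Γ, (g : S3xR ≃ᵢ S3xR) z = z → (g : S3xR ≃ᵢ S3xR) ≠ 1 →
        ∀ p : S3xR, ((g : S3xR ≃ᵢ S3xR) p).2 = -p.2 := by
  have eq_one_of_snd_eq (g) (hg : g ∈ Γ) (hgz : g z = z) (hsnd : ∀ p, (g p).2 = p.2) : g = 1 := by
    by_contra hg₁
    obtain ⟨hz, ε, hε, hisolated⟩ := hiso g hg hg₁ z hgz
    rcases exists_fixed_ne_snd_or_forall_exists_fixed_near (by decide) hsnd hgz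
      with ⟨x, hx, hxz⟩ | hnear
    · exact hxz ((hiso g hg hg₁ x hx).1.trans hz.symm)
    · obtain ⟨y, hy, hyz, hdist⟩ := hnear ε hε
      exact (hisolated y hy hyz).not_gt (dist_comm y z ▸ hdist)
  have snd_eq_neg (g) (hg : g ∈ Γ) (hgz : g z = z) (hg₁ : g ≠ 1) (p : S3xR) : (g p).2 = -p.2 := by
    have hz : z.2 = 0 := (hiso g hg hg₁ z hgz).1
    have : Nonempty (Metric.sphere (0 : EuclideanSpace ℝ (Fin 4)) 1) := ⟨z.1⟩
    obtain ⟨ε, a, hε | hε, hsnd⟩ := g.isometry.exists_snd_eq Metric.sphere.dist_le_two_mul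
    all_goals have ha : 0 = a := by simpa [hgz, hz] using hsnd z
    · exact absurd (eq_one_of_snd_eq g hg hgz (by simp [hsnd, hε, ← ha])) hg₁
    · simp [hsnd, hε, ← ha]
  refine ⟨Nat.card_subtype_le_two_of_mul_eq_one fun a b ha hb ha₁ hb₁ => ?_,
    fun g hgz hg₁ => snd_eq_neg g g.2 hgz hg₁⟩
  refine Subtype.ext (eq_one_of_snd_eq _ (a * b).2 (by simp [ha, hb]) fun p => ?_)
  simp [snd_eq_neg a a.2 ha (by simpa using ha₁), snd_eq_neg b b.2 hb (by simpa using hb₁)]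

/-- Let `Γ` be a finite group of isometries of `S³ × ℝ` such that all fixed points of
nontrivial elements are isolated and lie in `S³ × {0}`. If `γ ∈ Γ` fixes a point
`z = (o, 0)`, then the stabilizer of `z` in `Γ` has order at most `2`, and any nontrivial
element of the stabilizer acts on the `ℝ` factor by `s ↦ -s`. -/
theorem stabilizer_order_le_two
    (Γ : Subgroup (S3xR ≃ᵢ S3xR)) (hΓ : Finite Γ)
    (hiso : ∀ g ∈ Γ, g ≠ 1 → ∀ x : S3xR, g x = x →
      x.2 = 0 ∧ ∃ ε > 0, ∀ y : S3xR, g y = y → y ≠ x → ε ≤ dist x y)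
    (γ : S3xR ≃ᵢ S3xR) (hγ : γ ∈ Γ)
    (z : S3xR) (hz : z.2 = 0) (hγz : γ z = z) :
    Nat.card {g : Γ // (g : S3xR ≃ᵢ S3xR) z = z} ≤ 2 ∧
      ∀ g : Γ, (g : S3xR ≃ᵢ S3xR) z = z → (g : S3xR ≃ᵢ S3xR) ≠ 1 →
        ∀ p : S3xR, ((g : S3xR ≃ᵢ S3xR) p).2 = -p.2 :=
  stabilizer_order_le_two_general Γ hiso z
end
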